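/- arXiv:1301.2636 — 7 statements merged into one kernel-verified Lean document; each statement's English description precedes it below -/
import Mathlib

section
/- If F is analytic on the open unit disc and F converges at a boundary point in the sense that its Taylor series ∑ c(n) e^{int} converges at t, then F(z) converges non-tangentially to the same value at e^{it}. -/
open Complex Filter Metric

/-- The Stolz angle (nontangential approach region) at a boundary point `ζ` of the unit
disc, with aperture parameter `M`. -/
def stolzAngle (ζ : ℂ) (M : ℝ) : Set ℂ :=
  {z : ℂ | ‖z‖ < 1 ∧ ‖ζ - z‖ < M * (1 - ‖z‖)}

/-- `F` has non-tangential limit `L` at the boundary point `ζ` if `F(z) → L` as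
`z → ζ` within every Stolz angle at `ζ`. -/
def HasNontangentialLimit (F : ℂ → ℂ) (ζ L : ℂ) : Prop :=
  ∀ M : ℝ, 1 < M → Tendsto F (nhdsWithin ζ (stolzAngle ζ M)) (nhds L)

/-! Rotating by `ζ⁻¹` carries the Stolz angle at `ζ` onto the Stolz set at `1`, so this is
Mathlib's Abel limit theorem `Complex.tendsto_tsum_powerSeries_nhdsWithin_stolzSet` applied to
the rotated coefficients `c n * ζ ^ n`. -/

open Topology

theorem mapsTo_inv_mul_stolzAngle {ζ : ℂ} (hζ : ‖ζ‖ = 1) (M : ℝ) :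
    Set.MapsTo (ζ⁻¹ * ·) (stolzAngle ζ M) (stolzSet M) := by
  have hζ₀ : ζ ≠ 0 := by rintro rfl; simp at hζ
  rintro z ⟨hz, hζz⟩
  have h_sub : (1 : ℂ) - ζ⁻¹ * z = ζ⁻¹ * (ζ - z) := by field_simp
  refine ⟨?_, ?_⟩ <;> simpa [norm_mul, hζ, h_sub]

theorem tendsto_nhdsWithin_stolzAngle_inv_mul {ζ : ℂ} (hζ : ‖ζ‖ = 1) (M : ℝ) :
    Tendsto (ζ⁻¹ * ·) (𝓝[stolzAngle ζ M] ζ) (𝓝[stolzSet M] 1) := by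
  have hζ₀ : ζ ≠ 0 := by rintro rfl; simp at hζ
  have h := ((continuous_const_mul ζ⁻¹).tendsto ζ).mono_left
    (nhdsWithin_le_nhds (s := stolzAngle ζ M))
  rw [inv_mul_cancel₀ hζ₀] at h
  exact tendsto_nhdsWithin_iff.mpr
    ⟨h, eventually_nhdsWithin_of_forall (mapsTo_inv_mul_stolzAngle hζ M)⟩

theorem tendsto_tsum_powerSeries_nhdsWithin_stolzAngle {c : ℕ → ℂ} {ζ l : ℂ} (hζ : ‖ζ‖ = 1)
    (h : Tendsto (fun n ↦ ∑ i ∈ Finset.range n, c i * ζ ^ i) atTop (𝓝 l)) (M : ℝ) :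
    Tendsto (fun z ↦ ∑' n, c n * z ^ n) (𝓝[stolzAngle ζ M] ζ) (𝓝 l) := by
  have hζ₀ : ζ ≠ 0 := by rintro rfl; simp at hζ
  refine ((tendsto_tsum_powerSeries_nhdsWithin_stolzSet h).comp
    (tendsto_nhdsWithin_stolzAngle_inv_mul hζ M)).congr fun z ↦ tsum_congr fun n ↦ ?_
  simp only [mul_pow, inv_pow]
  field_simp

/-- Abel's theorem in its non-tangential form: if `F(z) = ∑_{n ≥ 0} c(n) zⁿ` on the open
unit disc and the series `∑_{n ≥ 0} c(n) e^{int}` converges to `L` at `t`, then `F(z)`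
converges non-tangentially to `L` at `e^{it}`. -/
theorem abel_nontangential (c : ℕ → ℂ) (F : ℂ → ℂ)
    (hF : ∀ z ∈ ball (0 : ℂ) 1, HasSum (fun n : ℕ => c n * z ^ n) (F z))
    (t : ℝ) (L : ℂ)
    (hconv : Tendsto (fun N : ℕ => ∑ n ∈ Finset.range (N + 1),
        c n * Complex.exp (Complex.I * n * t)) atTop (nhds L)) :
    HasNontangentialLimit F (Complex.exp (Complex.I * t)) L := by
  intro M _
  have hζ : ‖exp (I * t)‖ = 1 := by rw [mul_comm]; exact norm_exp_ofReal_mul_I t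
  have h_partial : Tendsto (fun N ↦ ∑ n ∈ Finset.range N, c n * exp (I * t) ^ n)
      atTop (𝓝 L) := by
    refine (tendsto_add_atTop_iff_nat 1).mp (hconv.congr fun N ↦ ?_)
    simp_rw [← exp_nat_mul, mul_left_comm, mul_assoc]
  refine (tendsto_tsum_powerSeries_nhdsWithin_stolzAngle hζ h_partial M).congr' ?_
  filter_upwards [self_mem_nhdsWithin] with z hz
  exact (hF z (mem_ball_zero_iff.mpr hz.1)).tsum_eq
end

section
/- If μ is a complex Borel measure on the circle whose Fourier coefficients μ̂(n) tend to 0 as n → +∞, then μ̂(n) also tends to 0 as n → −∞. -/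
/-!
Write `μ = f ν = p |μ|` with `|μ| = ‖f‖ ν` and `|p| ≤ 1`. Multiplying a measure by `e^{ikt}` shifts
its Fourier coefficients by `k`, so if `μ̂(n) → 0` as `n → +∞`, the same holds for `h μ` whenever
`h` is a trigonometric polynomial. Since `|(h μ)^(n)| ≤ ‖h‖_{L¹(|μ|)}` uniformly in `n` and
trigonometric polynomials are dense in `L¹(|μ|)`, it then holds for every bounded `h`.
With `h = conj p` this says that the coefficients of the positive measure `|μ|` tend to `0` at
`+∞`; they satisfy `|μ|^(-n) = conj |μ|^(n)`, so they also tend to `0` at `-∞`, and the same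
argument at `-∞` with `h = p` gives the claim for `μ = p |μ|`.
-/

open MeasureTheory Complex Filter

noncomputable def cmFourierCoeff (ν : Measure (AddCircle (2 * Real.pi)))
    (f : AddCircle (2 * Real.pi) → ℂ) (n : ℤ) : ℂ :=
  ∫ x, (fourier (-n) x : ℂ) * f x ∂ν

open Submodule Set ENNReal Topology ComplexConjugate

namespace RCLike

variable {𝕜 : Type*} [RCLike 𝕜]

theorem norm_div_norm_le_one (z : 𝕜) : ‖z / ‖z‖‖ ≤ 1 := by
  rcases eq_or_ne z 0 with rfl | hz
  · simp
  · rw [norm_div, norm_ofReal, abs_norm, div_self (norm_ne_zero_iff.2 hz)]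

theorem div_norm_mul_norm (z : 𝕜) : z / ‖z‖ * ‖z‖ = z :=
  div_mul_cancel_of_imp fun h => by simpa using h

theorem conj_div_norm_mul (z : 𝕜) : conj (z / ‖z‖) * z = ‖z‖ := by
  rcases eq_or_ne z 0 with rfl | hz
  · simp
  · rw [map_div₀, conj_ofReal, div_mul_eq_mul_div, conj_mul, sq,
      mul_div_cancel_right₀ _ (ofReal_ne_zero.2 (norm_ne_zero_iff.2 hz))]

end RCLike

namespace MeasureTheory

theorem Integrable.continuousMap_mul {α 𝕜 : Type*} [TopologicalSpace α] [CompactSpace α]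
    [TopologicalSpace.PseudoMetrizableSpace α] [MeasurableSpace α] [OpensMeasurableSpace α] [RCLike 𝕜]
    {μ : Measure α} {f : α → 𝕜} (hf : Integrable f μ) (q : C(α, 𝕜)) :
    Integrable (⇑q * f) μ :=
  hf.bdd_mul q.continuous.aestronglyMeasurable (ae_of_all _ q.norm_coe_le_norm)

namespace MemLp

variable {T : ℝ} [Fact (0 < T)]

theorem exists_mem_span_fourier_eLpNorm_sub_lt {ρ : Measure (AddCircle T)} [IsFiniteMeasure ρ]
    {p : ℝ≥0∞} [Fact (1 ≤ p)] (hp : p ≠ ∞) {h : AddCircle T → ℂ} (hh : MemLp h p ρ)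
    {ε : ℝ≥0∞} (hε : 0 < ε) :
    ∃ q ∈ span ℂ (range (fourier (T := T))), eLpNorm (h - ⇑q) p ρ < ε := by
  have hmem := ((ContinuousMap.toLp_denseRange ℂ ρ ℂ hp).topologicalClosure_map_submodule
    span_fourier_closure_eq_top).ge (mem_top (x := hh.toLp h))
  rw [← SetLike.mem_coe, topologicalClosure_coe] at hmem
  obtain ⟨_, ⟨q, hq, rfl⟩, hlt⟩ := EMetric.mem_closure_iff.1 hmem ε hε
  rw [Lp.edist_def] at hlt
  exact ⟨q, hq,
    (eLpNorm_congr_ae (hh.coeFn_toLp.sub (ContinuousMap.coeFn_toLp ρ q)).symm).trans_lt hlt⟩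

theorem exists_mem_span_fourier_lintegral_enorm_sub_mul_lt {ν : Measure (AddCircle T)}
    {f h : AddCircle T → ℂ} (hh : MemLp h ∞ ν) (hf : Integrable f ν) {ε : ℝ≥0∞} (hε : 0 < ε) :
    ∃ q ∈ span ℂ (range (fourier (T := T))), ∫⁻ x, ‖(h x - q x) * f x‖ₑ ∂ν < ε := by
  set ρ := ν.withDensity fun x => ‖f x‖ₑ
  have : IsFiniteMeasure ρ := isFiniteMeasure_withDensity hf.2.ne
  have hρ : ρ ≪ ν := withDensity_absolutelyContinuous ν _
  have hhρ : MemLp h ∞ ρ := by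
    refine ⟨hh.1.mono_ac hρ, ?_⟩
    have hlt := hh.2
    rw [eLpNorm_exponent_top] at hlt ⊢
    exact (eLpNormEssSup_mono_measure h hρ).trans_lt hlt
  obtain ⟨q, hq, hlt⟩ :=
    (hhρ.mono_exponent le_top).exists_mem_span_fourier_eLpNorm_sub_lt one_ne_top hε
  refine ⟨q, hq, ?_⟩
  rw [eLpNorm_one_eq_lintegral_enorm, lintegral_withDensity_eq_lintegral_mul₀ hf.1.enorm
    (hh.1.sub q.continuous.aestronglyMeasurable).enorm] at hlt
  simpa only [Pi.mul_apply, Pi.sub_apply, enorm_mul, mul_comm] using hlt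

end MemLp

end MeasureTheory

theorem norm_fourier_apply {T : ℝ} (n : ℤ) (x : AddCircle T) : ‖fourier n x‖ = 1 :=
  Circle.norm_coe _

instance fact_two_pi_pos : Fact (0 < 2 * Real.pi) := ⟨Real.two_pi_pos⟩

section FourierCoeff

variable {ν : Measure (AddCircle (2 * Real.pi))} {f g : AddCircle (2 * Real.pi) → ℂ}

theorem cmFourierCoeff_add (hf : Integrable f ν) (hg : Integrable g ν) (n : ℤ) :
    cmFourierCoeff ν (f + g) n = cmFourierCoeff ν f n + cmFourierCoeff ν g n := by
  simp only [cmFourierCoeff, Pi.add_apply, mul_add]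
  exact integral_add (hf.continuousMap_mul _) (hg.continuousMap_mul _)

theorem cmFourierCoeff_sub (hf : Integrable f ν) (hg : Integrable g ν) (n : ℤ) :
    cmFourierCoeff ν (f - g) n = cmFourierCoeff ν f n - cmFourierCoeff ν g n := by
  simp only [cmFourierCoeff, Pi.sub_apply, mul_sub]
  exact integral_sub (hf.continuousMap_mul _) (hg.continuousMap_mul _)

theorem cmFourierCoeff_smul (c : ℂ) (n : ℤ) :
    cmFourierCoeff ν (c • f) n = c • cmFourierCoeff ν f n := by
  simp only [cmFourierCoeff, Pi.smul_apply, mul_smul_comm]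
  exact integral_smul c _

theorem cmFourierCoeff_fourier_mul (k n : ℤ) :
    cmFourierCoeff ν (fun x => fourier k x * f x) n = cmFourierCoeff ν f (n - k) := by
  refine integral_congr_ae (ae_of_all _ fun x => ?_)
  dsimp only
  rw [show -(n - k) = -n + k by ring, fourier_add, mul_assoc]

theorem enorm_cmFourierCoeff_le (n : ℤ) : ‖cmFourierCoeff ν f n‖ₑ ≤ ∫⁻ x, ‖f x‖ₑ ∂ν :=
  (enorm_integral_le_lintegral_enorm _).trans_eq <| lintegral_congr fun x => by
    rw [enorm_mul, ← ofReal_norm, norm_fourier_apply, ENNReal.ofReal_one, one_mul]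

theorem cmFourierCoeff_neg_of_conj_eq (hf : ∀ x, conj (f x) = f x) (n : ℤ) :
    cmFourierCoeff ν f (-n) = conj (cmFourierCoeff ν f n) := by
  rw [cmFourierCoeff, cmFourierCoeff, ← integral_conj]
  simp only [map_mul, hf, ← fourier_neg, neg_neg]

theorem tendsto_cmFourierCoeff_atBot_of_conj_eq (hf : ∀ x, conj (f x) = f x)
    (hf0 : Tendsto (cmFourierCoeff ν f) atTop (𝓝 0)) :
    Tendsto (cmFourierCoeff ν f) atBot (𝓝 0) := by
  have := ((continuous_conj.tendsto 0).comp hf0).comp tendsto_neg_atBot_atTop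
  simpa [Function.comp_def, cmFourierCoeff_neg_of_conj_eq hf] using this

end FourierCoeff

section Multiplier

variable {ν : Measure (AddCircle (2 * Real.pi))} {f : AddCircle (2 * Real.pi) → ℂ} {l : Filter ℤ}

theorem tendsto_cmFourierCoeff_mul_of_mem_span (hl : ∀ k : ℤ, Tendsto (· - k) l l)
    (hf : Integrable f ν) (hf0 : Tendsto (cmFourierCoeff ν f) l (𝓝 0))
    {q : C(AddCircle (2 * Real.pi), ℂ)} (hq : q ∈ span ℂ (range (fourier (T := 2 * Real.pi)))) :
    Tendsto (cmFourierCoeff ν (⇑q * f)) l (𝓝 0) := by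
  induction hq using span_induction with
  | mem _ hq =>
    obtain ⟨k, rfl⟩ := hq
    exact (hf0.comp (hl k)).congr fun n => (cmFourierCoeff_fourier_mul k n).symm
  | zero => exact tendsto_const_nhds.congr fun n => by simp [cmFourierCoeff]
  | add a b _ _ ha hb =>
    rw [ContinuousMap.coe_add, add_mul]
    simpa only [add_zero] using (ha.add hb).congr fun n =>
      (cmFourierCoeff_add (hf.continuousMap_mul a) (hf.continuousMap_mul b) n).symm
  | smul c q _ hq =>
    rw [ContinuousMap.coe_smul, smul_mul_assoc]
    simpa only [smul_zero] using (hq.const_smul c).congr fun n => (cmFourierCoeff_smul c n).symm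

theorem tendsto_cmFourierCoeff_mul (hl : ∀ k : ℤ, Tendsto (· - k) l l)
    (hf : Integrable f ν) (hf0 : Tendsto (cmFourierCoeff ν f) l (𝓝 0))
    {h : AddCircle (2 * Real.pi) → ℂ} (hh : MemLp h ∞ ν) :
    Tendsto (cmFourierCoeff ν (h * f)) l (𝓝 0) := by
  refine EMetric.tendsto_nhds.2 fun ε hε => ?_
  obtain ⟨q, hq, hhq⟩ :=
    hh.exists_mem_span_fourier_lintegral_enorm_sub_mul_lt hf (ENNReal.half_pos hε.ne')
  filter_upwards [EMetric.tendsto_nhds.1 (tendsto_cmFourierCoeff_mul_of_mem_span hl hf hf0 hq)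
    (ε / 2) (ENNReal.half_pos hε.ne')] with n hn
  calc edist (cmFourierCoeff ν (h * f) n) 0
      ≤ edist (cmFourierCoeff ν (h * f) n) (cmFourierCoeff ν (q * f) n)
        + edist (cmFourierCoeff ν (q * f) n) 0 := edist_triangle _ _ _
    _ = ‖cmFourierCoeff ν ((h - q) * f) n‖ₑ + edist (cmFourierCoeff ν (q * f) n) 0 := by
      rw [edist_eq_enorm_sub, sub_mul,
        cmFourierCoeff_sub (hf.mul_of_top_right hh) (hf.continuousMap_mul q)]
    _ < ε / 2 + ε / 2 := ENNReal.add_lt_add ((enorm_cmFourierCoeff_le n).trans_lt hhq) hn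
    _ = ε := ENNReal.add_halves ε

end Multiplier

theorem rajchman_symmetry_general (ν : Measure (AddCircle (2 * Real.pi)))
    (f : AddCircle (2 * Real.pi) → ℂ) (hf : Integrable f ν)
    (h : Tendsto (fun n : ℤ => cmFourierCoeff ν f n) atTop (nhds 0)) :
    Tendsto (fun n : ℤ => cmFourierCoeff ν f n) atBot (nhds 0) := by
  set p : AddCircle (2 * Real.pi) → ℂ := fun x => f x / ‖f x‖
  have hp_meas : AEStronglyMeasurable p ν :=
    (hf.1.aemeasurable.div
      (Complex.measurable_ofReal.comp_aemeasurable hf.1.norm.aemeasurable)).aestronglyMeasurable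
  have hp : MemLp p ∞ ν :=
    memLp_top_of_bound hp_meas 1 (ae_of_all _ fun x => RCLike.norm_div_norm_le_one (f x))
  have hp_conj : MemLp (fun x => conj (p x)) ∞ ν :=
    memLp_top_of_bound (continuous_conj.comp_aestronglyMeasurable hp_meas) 1
      (ae_of_all _ fun x => (RCLike.norm_conj _).trans_le (RCLike.norm_div_norm_le_one (f x)))
  have habs_top : Tendsto (cmFourierCoeff ν fun x => (‖f x‖ : ℂ)) atTop (𝓝 0) := by
    have := tendsto_cmFourierCoeff_mul (fun k => tendsto_atTop_add_const_right _ (-k) tendsto_id)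
      hf h hp_conj
    rwa [show (fun x => conj (p x)) * f = fun x => (‖f x‖ : ℂ) from
      funext fun x => RCLike.conj_div_norm_mul (f x)] at this
  have habs_bot := tendsto_cmFourierCoeff_atBot_of_conj_eq (fun x => conj_ofReal _) habs_top
  have hf_abs : Integrable (fun x => (‖f x‖ : ℂ)) ν := hf.norm.ofReal
  have := tendsto_cmFourierCoeff_mul (fun k => tendsto_atBot_add_const_right _ (-k) tendsto_id)
    hf_abs habs_bot hp
  rwa [show p * (fun x => (‖f x‖ : ℂ)) = f from
    funext fun x => RCLike.div_norm_mul_norm (f x)] at this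

/-- Rajchman's symmetry theorem: if the Fourier coefficients of a complex Borel measure
on the circle tend to `0` as `n → +∞`, then they also tend to `0` as `n → −∞`. -/
theorem rajchman_symmetry (ν : Measure (AddCircle (2 * Real.pi))) [IsFiniteMeasure ν]
    (f : AddCircle (2 * Real.pi) → ℂ) (hf : Integrable f ν)
    (h : Tendsto (fun n : ℤ => cmFourierCoeff ν f n) atTop (nhds 0)) :
    Tendsto (fun n : ℤ => cmFourierCoeff ν f n) atBot (nhds 0) :=
  rajchman_symmetry_general ν f hf h
end

section
/- If μ is a complex Borel measure on the circle such that ∑_{n>0} |μ̂(n)|²/n < ∞, then also ∑_{n<0} |μ̂(n)|²/|n| < ∞. -/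
/-!
The kernel `K_N(t) = ∑_{n=1}^N (e^{int} - e^{-int}) / n = 2i ∑_{n=1}^N sin(nt) / n` is bounded
uniformly in `N` and `t`: with `z = e^{it}`, each of the first `≈ 1/|1 - z|` terms of
`∑ zⁿ / n` has imaginary part `O(|1 - z|)`, and the rest is controlled by Abel summation, the
geometric sums `∑ zⁿ` being `O(1/|1 - z|)`. Integrating `K_N(x - y)` against `dμ(x) dμ̄(y)` gives
`∑_{n=1}^N (|μ̂(-n)|² - |μ̂(n)|²) / n`, which is therefore at most `6 ‖μ‖²`; so the partial sums
over negative frequencies are bounded by the series over positive ones plus `6 ‖μ‖²`.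
-/

open MeasureTheory Complex Filter

open Finset ComplexConjugate

theorem norm_sum_range_smul_le_of_antitone {E : Type*} [NormedAddCommGroup E] [NormedSpace ℝ E]
    {b : ℕ → ℝ} (hb : Antitone b) (hb0 : ∀ n, 0 ≤ b n) {a : ℕ → E} {G : ℝ}
    (ha : ∀ m, ‖∑ i ∈ range m, a i‖ ≤ G) (n : ℕ) :
    ‖∑ i ∈ range n, b i • a i‖ ≤ G * b 0 := by
  rw [sum_range_by_parts]
  calc _ ≤ ‖b (n - 1) • ∑ i ∈ range n, a i‖
          + ∑ i ∈ range (n - 1), ‖(b (i + 1) - b i) • ∑ j ∈ range (i + 1), a j‖ :=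
        (norm_sub_le _ _).trans (add_le_add le_rfl (norm_sum_le _ _))
    _ ≤ b (n - 1) * G + ∑ i ∈ range (n - 1), (b i - b (i + 1)) * G := by
        gcongr with i
        · rw [norm_smul, Real.norm_of_nonneg (hb0 _)]
          exact mul_le_mul_of_nonneg_left (ha n) (hb0 _)
        · rw [norm_smul, Real.norm_of_nonpos (sub_nonpos.2 (hb i.le_succ)), neg_sub]
          exact mul_le_mul_of_nonneg_left (ha _) (sub_nonneg.2 (hb i.le_succ))
    _ = G * b 0 := by rw [← sum_mul, sum_range_sub']; ring

theorem norm_geom_sum_le {z : ℂ} (hz : ‖z‖ ≤ 1) (hz1 : z ≠ 1) (n : ℕ) :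
    ‖∑ i ∈ range n, z ^ i‖ ≤ 2 / ‖1 - z‖ := by
  rw [geom_sum_eq hz1, norm_div, norm_sub_rev z]
  gcongr
  calc ‖z ^ n - 1‖ ≤ ‖z‖ ^ n + ‖(1 : ℂ)‖ := by rw [← norm_pow]; exact norm_sub_le _ _
    _ ≤ 2 := by rw [norm_one]; linarith [pow_le_one₀ (norm_nonneg z) hz (n := n)]

theorem norm_pow_sub_one_le {z : ℂ} (hz : ‖z‖ ≤ 1) (n : ℕ) : ‖z ^ n - 1‖ ≤ n * ‖z - 1‖ := by
  induction n with
  | zero => simp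
  | succ n ih =>
    calc ‖z ^ (n + 1) - 1‖ = ‖z ^ n * (z - 1) + (z ^ n - 1)‖ := by ring_nf
      _ ≤ ‖z - 1‖ + n * ‖z - 1‖ := by
        refine (norm_add_le _ _).trans (add_le_add ?_ ih)
        rw [norm_mul, norm_pow]
        exact mul_le_of_le_one_left (norm_nonneg _) (pow_le_one₀ (norm_nonneg z) hz)
      _ = (n + 1 : ℕ) * ‖z - 1‖ := by push_cast; ring

theorem abs_im_sum_range_inv_mul_pow_le {z : ℂ} (hz : ‖z‖ ≤ 1) (N : ℕ) :
    |(∑ n ∈ range N, ((n : ℂ) + 1)⁻¹ * z ^ (n + 1)).im| ≤ N * ‖1 - z‖ := by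
  rw [im_sum]
  refine (abs_sum_le_sum_abs _ _).trans ?_
  calc ∑ n ∈ range N, |(((n : ℂ) + 1)⁻¹ * z ^ (n + 1)).im|
      ≤ ∑ n ∈ range N, ‖1 - z‖ := by
        gcongr with n
        have hn : (0 : ℝ) < n + 1 := by positivity
        have hcast : ((n : ℂ) + 1)⁻¹ = (((n : ℝ) + 1)⁻¹ : ℝ) := by push_cast; rfl
        rw [hcast, im_ofReal_mul, abs_mul, abs_inv, abs_of_pos hn, inv_mul_le_iff₀ hn]
        calc |(z ^ (n + 1)).im| = |(z ^ (n + 1) - 1).im| := by simp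
          _ ≤ ‖z ^ (n + 1) - 1‖ := abs_im_le_norm _
          _ ≤ (n + 1 : ℕ) * ‖z - 1‖ := norm_pow_sub_one_le hz _
          _ = (n + 1) * ‖1 - z‖ := by push_cast; rw [norm_sub_rev]
    _ = N * ‖1 - z‖ := by simp

theorem norm_sum_Ico_inv_mul_pow_le {z : ℂ} (hz : ‖z‖ ≤ 1) (hz1 : z ≠ 1) (A B : ℕ) :
    ‖∑ n ∈ Ico A B, ((n : ℂ) + 1)⁻¹ * z ^ (n + 1)‖ ≤ 2 / ‖1 - z‖ * ((A : ℝ) + 1)⁻¹ := by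
  have hterm : ∀ k, ((↑(A + k) : ℂ) + 1)⁻¹ * z ^ (A + k + 1)
      = ((A + k : ℕ) + 1 : ℝ)⁻¹ • z ^ (A + k + 1) := by
    simp [Complex.real_smul]
  rw [sum_Ico_eq_sum_range]
  simp_rw [hterm]
  have hpartial : ∀ m, ‖∑ i ∈ range m, z ^ (A + i + 1)‖ ≤ 2 / ‖1 - z‖ := by
    intro m
    have hfactor : ∑ i ∈ range m, z ^ (A + i + 1) = z ^ (A + 1) * ∑ i ∈ range m, z ^ i := by
      rw [mul_sum]; exact sum_congr rfl fun i _ => by ring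
    rw [hfactor, norm_mul, norm_pow]
    exact mul_le_of_le_one_left (by positivity) (pow_le_one₀ (norm_nonneg z) hz) |>.trans'
      (mul_le_mul_of_nonneg_left (norm_geom_sum_le hz hz1 m) (by positivity))
  simpa using norm_sum_range_smul_le_of_antitone (b := fun k : ℕ => ((A + k : ℕ) + 1 : ℝ)⁻¹)
    (fun _ _ hij => by dsimp only; gcongr) (fun k => by positivity) hpartial (B - A)

theorem abs_im_sum_range_inv_mul_pow_le_three {z : ℂ} (hz : ‖z‖ ≤ 1) (N : ℕ) :
    |(∑ n ∈ range N, ((n : ℂ) + 1)⁻¹ * z ^ (n + 1)).im| ≤ 3 := by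
  rcases eq_or_ne z 1 with rfl | hz1
  · exact (abs_im_sum_range_inv_mul_pow_le hz N).trans (by simp)
  set d := ‖1 - z‖
  have hd : 0 < d := norm_pos_iff.2 (sub_ne_zero.2 hz1.symm)
  set M := ⌊d⁻¹⌋₊
  have hMd : M * d ≤ 1 :=
    calc M * d ≤ d⁻¹ * d := by gcongr; exact Nat.floor_le (by positivity)
      _ = 1 := inv_mul_cancel₀ hd.ne'
  have hM1 : ((M : ℝ) + 1)⁻¹ < d := (inv_lt_comm₀ hd (by positivity)).1 (Nat.lt_floor_add_one _)
  rcases le_or_gt N M with hNM | hMN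
  · refine (abs_im_sum_range_inv_mul_pow_le hz N).trans ?_
    nlinarith [(Nat.cast_le (α := ℝ)).2 hNM]
  rw [← sum_range_add_sum_Ico _ hMN.le, add_im]
  have htail : ‖∑ n ∈ Ico M N, ((n : ℂ) + 1)⁻¹ * z ^ (n + 1)‖ ≤ 2 := by
    refine (norm_sum_Ico_inv_mul_pow_le hz hz1 M N).trans ?_
    calc 2 / d * ((M : ℝ) + 1)⁻¹ ≤ 2 / d * d := by gcongr
      _ = 2 := div_mul_cancel₀ _ hd.ne'
  calc _ ≤ |(∑ n ∈ range M, ((n : ℂ) + 1)⁻¹ * z ^ (n + 1)).im|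
        + |(∑ n ∈ Ico M N, ((n : ℂ) + 1)⁻¹ * z ^ (n + 1)).im| := abs_add_le _ _
    _ ≤ M * d + 2 := add_le_add (abs_im_sum_range_inv_mul_pow_le hz M)
        ((abs_im_le_norm _).trans htail)
    _ ≤ 3 := by linarith

theorem fourier_natCast_add_one_apply {T : ℝ} (n : ℕ) (t : AddCircle T) :
    fourier ((n : ℤ) + 1) t = (t.toCircle : ℂ) ^ (n + 1) := by
  rw [fourier_apply, ← Nat.cast_succ, natCast_zsmul, AddCircle.toCircle_nsmul, Circle.coe_pow]

theorem fourier_sub_apply {T : ℝ} (m : ℤ) (x y : AddCircle T) :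
    fourier m (x - y) = fourier m x * conj (fourier m y) := by
  rw [fourier_apply, smul_sub, sub_eq_add_neg, AddCircle.toCircle_add, Circle.coe_mul,
    fourier_neg']
  rfl

theorem norm_sum_range_inv_mul_fourier_sub_le {T : ℝ} (t : AddCircle T) (N : ℕ) :
    ‖∑ n ∈ range N, ((n : ℂ) + 1)⁻¹ * (fourier ((n : ℤ) + 1) t - fourier (-((n : ℤ) + 1)) t)‖
      ≤ 6 := by
  set S := ∑ n ∈ range N, ((n : ℂ) + 1)⁻¹ * (t.toCircle : ℂ) ^ (n + 1)
  have hS : ∑ n ∈ range N,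
      ((n : ℂ) + 1)⁻¹ * (fourier ((n : ℤ) + 1) t - fourier (-((n : ℤ) + 1)) t) = S - conj S := by
    simp only [S, fourier_neg, fourier_natCast_add_one_apply, map_sum, map_mul, map_pow, map_inv₀,
      map_add, map_natCast, map_one, mul_sub, sum_sub_distrib]
  rw [hS, sub_conj, norm_mul, norm_I, mul_one, norm_real, Real.norm_eq_abs, abs_mul,
    abs_two]
  linarith [abs_im_sum_range_inv_mul_pow_le_three (Circle.norm_coe t.toCircle).le N]

section Energy

variable {X : Type*} [MeasurableSpace X] {T : ℝ}

theorem integrable_mul_conj_prod {ν : Measure X} {f : X → ℂ} (hf : Integrable f ν) :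
    Integrable (fun p : X × X => f p.1 * conj (f p.2)) (ν.prod ν) :=
  hf.mul_prod (hf.congr' hf.1.star (by simp))

/-- The energy `∫∫ K(x - y) dμ(x) dμ̄(y)` of `μ = f ν` with respect to the kernel `K`. -/
noncomputable def kernelEnergy (ν : Measure (AddCircle T)) (f : AddCircle T → ℂ)
    (K : AddCircle T → ℂ) : ℂ :=
  ∫ p, K (p.1 - p.2) * (f p.1 * conj (f p.2)) ∂ν.prod ν

variable {ν : Measure (AddCircle T)} [SFinite ν] {f : AddCircle T → ℂ}

theorem norm_kernelEnergy_le (hf : Integrable f ν) {K : AddCircle T → ℂ} {C : ℝ}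
    (hK : ∀ t, ‖K t‖ ≤ C) : ‖kernelEnergy ν f K‖ ≤ C * (∫ x, ‖f x‖ ∂ν) ^ 2 :=
  calc ‖kernelEnergy ν f K‖ ≤ ∫ p, C * (‖f p.1‖ * ‖f p.2‖) ∂ν.prod ν := by
        refine norm_integral_le_of_norm_le ((hf.norm.mul_prod hf.norm).const_mul C)
          (ae_of_all _ fun p => ?_)
        rw [norm_mul, norm_mul, RCLike.norm_conj]
        exact mul_le_mul_of_nonneg_right (hK _) (by positivity)
    _ = C * (∫ x, ‖f x‖ ∂ν) ^ 2 := by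
        rw [integral_const_mul, integral_prod_mul (fun x => ‖f x‖) (fun x => ‖f x‖), sq]

end Energy

section Coefficients

variable {ν : Measure (AddCircle (2 * Real.pi))} [SFinite ν] {f : AddCircle (2 * Real.pi) → ℂ}

theorem kernelEnergy_fourier (m : ℤ) :
    kernelEnergy ν f (fourier m) = ‖cmFourierCoeff ν f (-m)‖ ^ 2 := by
  calc kernelEnergy ν f (fourier m)
      = ∫ p, (fourier m p.1 * f p.1) * conj (fourier m p.2 * f p.2) ∂ν.prod ν := by
        refine integral_congr_ae (ae_of_all _ fun p => ?_)
        simp only [fourier_sub_apply, map_mul]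
        ring
    _ = ‖cmFourierCoeff ν f (-m)‖ ^ 2 := by
        rw [integral_prod_mul (fun x => fourier m x * f x) (fun y => conj (fourier m y * f y)),
          integral_conj, cmFourierCoeff, neg_neg, mul_conj']

theorem kernelEnergy_sum_mul_fourier_sub (hf : Integrable f ν) {ι : Type*} (s : Finset ι)
    (c : ι → ℂ) (k : ι → ℤ) :
    kernelEnergy ν f (fun t => ∑ i ∈ s, c i * (fourier (k i) t - fourier (-k i) t))
      = ∑ i ∈ s, c i * (‖cmFourierCoeff ν f (-k i)‖ ^ 2 - ‖cmFourierCoeff ν f (k i)‖ ^ 2) := by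
  have hint : ∀ m : ℤ, Integrable
      (fun p : _ × _ => fourier m (p.1 - p.2) * (f p.1 * conj (f p.2))) (ν.prod ν) := fun m =>
    (integrable_mul_conj_prod hf).bdd_mul
      ((fourier m).continuous.comp (continuous_fst.sub continuous_snd)).aestronglyMeasurable
      (ae_of_all _ fun p => (Circle.norm_coe _).le)
  calc kernelEnergy ν f (fun t => ∑ i ∈ s, c i * (fourier (k i) t - fourier (-k i) t))
      = ∫ p, ∑ i ∈ s, c i * (fourier (k i) (p.1 - p.2) * (f p.1 * conj (f p.2))
          - fourier (-k i) (p.1 - p.2) * (f p.1 * conj (f p.2))) ∂ν.prod ν := by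
        refine integral_congr_ae (ae_of_all _ fun p => ?_)
        simp only [sum_mul]
        exact sum_congr rfl fun i _ => by ring
    _ = ∑ i ∈ s, c i * (kernelEnergy ν f (fourier (k i)) - kernelEnergy ν f (fourier (-k i))) := by
        refine (integral_finsetSum s fun i _ =>
          ((hint (k i)).sub (hint (-k i))).const_mul (c i)).trans ?_
        refine sum_congr rfl fun i _ => ?_
        rw [integral_const_mul, integral_sub' (hint _) (hint _)]
        rfl
    _ = _ := by simp only [kernelEnergy_fourier, neg_neg]

theorem sum_range_sq_norm_cmFourierCoeff_neg_sub_le (hf : Integrable f ν) (N : ℕ) :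
    ∑ n ∈ range N, (‖cmFourierCoeff ν f (-(n + 1))‖ ^ 2 - ‖cmFourierCoeff ν f (n + 1)‖ ^ 2)
      / (n + 1 : ℝ) ≤ 6 * (∫ x, ‖f x‖ ∂ν) ^ 2 := by
  have hK := norm_kernelEnergy_le hf fun t => norm_sum_range_inv_mul_fourier_sub_le t N
  rw [kernelEnergy_sum_mul_fourier_sub hf] at hK
  refine (le_abs_self _).trans (le_of_eq_of_le ?_ hK)
  rw [← Real.norm_eq_abs, ← norm_real]
  push_cast
  simp only [div_eq_inv_mul]

end Coefficients

/-- The Hruščev–Peller / Koosis–Pichorides symmetry theorem: for a complex Borel measure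
`μ` on the circle, if `∑_{n>0} |μ̂(n)|²/n < ∞` then `∑_{n<0} |μ̂(n)|²/|n| < ∞`. -/
theorem hruscev_peller (ν : Measure (AddCircle (2 * Real.pi))) [IsFiniteMeasure ν]
    (f : AddCircle (2 * Real.pi) → ℂ) (hf : Integrable f ν)
    (h : Summable fun n : ℕ => ‖cmFourierCoeff ν f (n + 1)‖ ^ 2 / (n + 1 : ℝ)) :
    Summable fun n : ℕ => ‖cmFourierCoeff ν f (-(n + 1))‖ ^ 2 / (n + 1 : ℝ) := by
  set P := fun n : ℕ => ‖cmFourierCoeff ν f (n + 1)‖ ^ 2 / (n + 1 : ℝ)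
  refine summable_of_sum_range_le (fun n => by positivity)
    (c := ∑' n, P n + 6 * (∫ x, ‖f x‖ ∂ν) ^ 2) fun N => ?_
  have hdiff := sum_range_sq_norm_cmFourierCoeff_neg_sub_le hf N
  have hP : ∑ n ∈ range N, P n ≤ ∑' n, P n := h.sum_le_tsum _ fun n _ => by positivity
  simp only [sub_div, sum_sub_distrib] at hdiff
  linarith
end

section
/- For subsets A, B of ℝ, the Hausdorff dimension of the sumset A + B is at most the Hausdorff dimension of A plus the upper Minkowski (box) dimension of B. -/
/-! For `s > dimH A` and `t > upperBoxDim B`, cover `A` by sets `U i` with `∑ (diam U i)^s`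
arbitrarily small, and `B`, at every small scale `ρ`, by at most `ρ^(-t)` balls of radius `ρ`.
After enlarging each `diam U i` to a positive radius `ρ i` at negligible cost, the products
`U i ×ˢ ball y (ρ i)` cover `A ×ˢ B` at total `(s + t)`-cost at most `2^(s+t) ∑ (ρ i)^s`, so
`μH[s + t] (A ×ˢ B) = 0`. Addition is Lipschitz, so `dimH (A + B) ≤ dimH (A ×ˢ B) ≤ s + t`. -/

open MeasureTheory Filter
open scoped Pointwise

/-- `coverNum B δ` is the minimal number of balls of radius `δ` needed to cover `B`
(`⊤` if no finite cover exists). -/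
noncomputable def coverNum (B : Set ℝ) (δ : ℝ) : ℕ∞ :=
  sInf {n : ℕ∞ | ∃ s : Finset ℝ, (s.card : ℕ∞) = n ∧ B ⊆ ⋃ x ∈ s, Metric.ball x δ}

/-- The upper Minkowski (box) dimension of `B ⊆ ℝ`:
`limsup_{δ → 0+} log N(B,δ) / log (1/δ)` (as an extended nonnegative real). -/
noncomputable def upperBoxDim (B : Set ℝ) : ENNReal :=
  Filter.limsup
    (fun δ : ℝ =>
      match coverNum B δ with
      | ⊤ => (⊤ : ENNReal)
      | (n : ℕ) => ENNReal.ofReal (Real.log n / Real.log (1 / δ)))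
    (nhdsWithin 0 (Set.Ioi 0))

open Metric Set Finset
open scoped ENNReal NNReal Topology

theorem Metric.ediam_prod_le {X Y : Type*} [PseudoEMetricSpace X] [PseudoEMetricSpace Y]
    (s : Set X) (t : Set Y) : ediam (s ×ˢ t) ≤ max (ediam s) (ediam t) :=
  ediam_le fun _ hp _ hq => max_le_max (edist_le_ediam_of_mem hp.1 hq.1)
    (edist_le_ediam_of_mem hp.2 hq.2)

theorem ENNReal.le_add_of_forall_lt_le_add {a b c : ℝ≥0∞} (h : ∀ s : ℝ≥0, c < s → a ≤ b + s) :
    a ≤ b + c := by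
  refine ENNReal.le_of_forall_pos_le_add fun ε hε hfin => ?_
  have hc : c ≠ ⊤ := (lt_of_le_of_lt le_add_self hfin).ne
  calc a ≤ b + (c.toNNReal + ε : ℝ≥0) := h _ <| by
        rw [ENNReal.coe_add, ENNReal.coe_toNNReal hc]
        exact ENNReal.lt_add_right hc (by simpa using hε.ne')
    _ = b + c + ε := by rw [ENNReal.coe_add, ENNReal.coe_toNNReal hc, add_assoc]

theorem ENNReal.mul_rpow_two_mul_le {N ρ : ℝ≥0∞} {s t : ℝ} (hρ₀ : ρ ≠ 0) (hρ : ρ ≠ ⊤)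
    (hst : 0 ≤ s + t) (hN : N ≤ ρ ^ (-t)) : N * (2 * ρ) ^ (s + t) ≤ 2 ^ (s + t) * ρ ^ s :=
  calc N * (2 * ρ) ^ (s + t) ≤ ρ ^ (-t) * (2 ^ (s + t) * ρ ^ (s + t)) := by
        rw [ENNReal.mul_rpow_of_nonneg _ _ hst]; gcongr
    _ = 2 ^ (s + t) * ρ ^ s := by
        rw [mul_left_comm, ← ENNReal.rpow_add _ _ hρ₀ hρ, neg_add_cancel_comm_assoc]

universe u v

variable {X : Type u} {Y : Type v} [EMetricSpace X] [EMetricSpace Y]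

def HasBallCover (t : ℝ) (B : Set Y) (δ : ℝ≥0∞) : Prop :=
  ∃ F : Finset Y, (#F : ℝ≥0∞) ≤ δ ^ (-t) ∧ B ⊆ ⋃ y ∈ F, eball y δ

section

variable [MeasurableSpace X] [BorelSpace X]

theorem exists_cover_rpow_tsum_lt_of_hausdorffMeasure_eq_zero {s : ℝ} (hs : 0 < s) {A : Set X}
    (hA : μH[s] A = 0) {r ε : ℝ≥0∞} (hr : 0 < r) (hε : 0 < ε) :
    ∃ U : ℕ → Set X, A ⊆ ⋃ i, U i ∧ (∀ i, ediam (U i) ≤ r) ∧ ∑' i, ediam (U i) ^ s < ε := by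
  have hlt : (⨅ (U : ℕ → Set X) (_ : A ⊆ ⋃ i, U i) (_ : ∀ i, ediam (U i) ≤ r),
      ∑' i, ⨆ _ : (U i).Nonempty, ediam (U i) ^ s) < ε := by
    refine lt_of_le_of_lt ?_ hε
    rw [← hA, Measure.hausdorffMeasure_apply]
    exact le_iSup₂ (f := fun r (_ : 0 < r) => ⨅ (U : ℕ → Set X) (_ : A ⊆ ⋃ i, U i)
      (_ : ∀ i, ediam (U i) ≤ r), ∑' i, ⨆ _ : (U i).Nonempty, ediam (U i) ^ s) r hr
  simp only [iInf_lt_iff] at hlt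
  obtain ⟨U, hAU, hUr, hsum⟩ := hlt
  refine ⟨U, hAU, hUr, lt_of_eq_of_lt (tsum_congr fun i => ?_) hsum⟩
  rcases (U i).eq_empty_or_nonempty with hU | hU
  · simp [hU, ENNReal.zero_rpow_of_pos hs]
  · rw [ciSup_pos hU]

theorem exists_cover_pos_radius_of_hausdorffMeasure_eq_zero {s : ℝ} (hs : 0 < s) {A : Set X}
    (hA : μH[s] A = 0) {r ε : ℝ≥0∞} (hr : 0 < r) (hε : 0 < ε) :
    ∃ (U : ℕ → Set X) (ρ : ℕ → ℝ≥0∞), A ⊆ ⋃ i, U i ∧ (∀ i, ediam (U i) ≤ ρ i) ∧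
      (∀ i, ρ i ∈ Ioc 0 r) ∧ ∑' i, ρ i ^ s ≤ ε := by
  have hε₂ : 0 < ε / 2 := ENNReal.half_pos hε.ne'
  obtain ⟨U, hAU, hUr, hUsum⟩ :=
    exists_cover_rpow_tsum_lt_of_hausdorffMeasure_eq_zero hs hA hr hε₂
  obtain ⟨η, hη, hηsum⟩ := ENNReal.exists_pos_sum_of_countable' hε₂.ne' ℕ
  refine ⟨U, fun i => max (ediam (U i)) (min r (η i ^ s⁻¹)), hAU, fun i => le_max_left _ _,
    fun i => ⟨lt_max_of_lt_right (lt_min hr (ENNReal.rpow_pos_of_nonneg (hη i) (by positivity))),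
      max_le (hUr i) (min_le_left _ _)⟩, ?_⟩
  calc ∑' i, max (ediam (U i)) (min r (η i ^ s⁻¹)) ^ s ≤ ∑' i, (ediam (U i) ^ s + η i) := by
        refine ENNReal.tsum_le_tsum fun i => ?_
        rw [ENNReal.max_rpow hs.le]
        refine max_le le_self_add (le_add_left ?_)
        calc min r (η i ^ s⁻¹) ^ s ≤ (η i ^ s⁻¹) ^ s := by gcongr; exact min_le_right _ _
          _ = η i := ENNReal.rpow_inv_rpow hs.ne' _
    _ = ∑' i, ediam (U i) ^ s + ∑' i, η i := ENNReal.tsum_add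
    _ ≤ ε / 2 + ε / 2 := add_le_add hUsum.le hηsum.le
    _ = ε := ENNReal.add_halves ε

theorem exists_prod_cover_tsum_le {s t : ℝ} (hs : 0 < s) (ht : 0 ≤ t) {A : Set X} {B : Set Y}
    (hA : μH[s] A = 0) {r : ℝ≥0∞} (hr : 0 < r) (hr_top : r ≠ ⊤)
    (hB : ∀ δ ∈ Ioc 0 r, HasBallCover t B δ) :
    ∃ (ι : Type v) (_ : Countable ι) (V : ι → Set (X × Y)), A ×ˢ B ⊆ ⋃ j, V j ∧
      (∀ j, ediam (V j) ≤ 2 * r) ∧ ∑' j, ediam (V j) ^ (s + t) ≤ 2 ^ (s + t) * r := by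
  obtain ⟨U, ρ, hAU, hUρ, hρ, hρsum⟩ :=
    exists_cover_pos_radius_of_hausdorffMeasure_eq_zero hs hA hr hr
  have hρ_top i : ρ i ≠ ⊤ := ((hρ i).2.trans_lt hr_top.lt_top).ne
  choose F hF hBF using fun i => hB (ρ i) (hρ i)
  have hdiam i (y : Y) : ediam (U i ×ˢ eball y (ρ i)) ≤ 2 * ρ i :=
    (ediam_prod_le _ _).trans (max_le ((hUρ i).trans (by rw [two_mul]; exact le_self_add))
      ediam_eball_le)
  refine ⟨Σ i, F i, inferInstance, fun p => U p.1 ×ˢ eball (p.2 : Y) (ρ p.1), ?_,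
    fun p => (hdiam _ _).trans (by gcongr; exact (hρ _).2), ?_⟩
  · rintro ⟨a, b⟩ ⟨ha, hb⟩
    obtain ⟨i, hi⟩ := mem_iUnion.1 (hAU ha)
    obtain ⟨y, hy, hby⟩ := mem_iUnion₂.1 (hBF i hb)
    exact mem_iUnion.2 ⟨⟨i, y, hy⟩, hi, hby⟩
  calc ∑' p : Σ i, F i, ediam (U p.1 ×ˢ eball (p.2 : Y) (ρ p.1)) ^ (s + t)
      = ∑' i, ∑ y ∈ F i, ediam (U i ×ˢ eball y (ρ i)) ^ (s + t) := by
        rw [ENNReal.tsum_sigma']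
        exact tsum_congr fun i =>
          Finset.tsum_subtype (F i) fun y => ediam (U i ×ˢ eball y (ρ i)) ^ (s + t)
    _ ≤ ∑' i, #(F i) * (2 * ρ i) ^ (s + t) := by
        refine ENNReal.tsum_le_tsum fun i => ?_
        rw [← nsmul_eq_mul]
        exact Finset.sum_le_card_nsmul _ _ _ fun y _ => by gcongr; exact hdiam i y
    _ ≤ ∑' i, 2 ^ (s + t) * ρ i ^ s := ENNReal.tsum_le_tsum fun i =>
        ENNReal.mul_rpow_two_mul_le (hρ i).1.ne' (hρ_top i) (by linarith) (hF i)
    _ ≤ 2 ^ (s + t) * r := by rw [ENNReal.tsum_mul_left]; gcongr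

theorem hausdorffMeasure_prod_eq_zero [MeasurableSpace (X × Y)] [BorelSpace (X × Y)] {s t : ℝ}
    (hs : 0 < s) (ht : 0 ≤ t) {A : Set X} {B : Set Y} (hA : μH[s] A = 0)
    (hB : ∀ᶠ δ in 𝓝[>] 0, HasBallCover t B δ) :
    μH[s + t] (A ×ˢ B) = 0 := by
  obtain ⟨u, hu, hBu⟩ := (mem_nhdsGT_iff_exists_Ioo_subset' zero_lt_one).1 hB
  obtain ⟨δ₀, hδ₀, hδ₀u⟩ := exists_between (α := ℝ≥0∞) hu
  set r : ℕ → ℝ≥0∞ := fun n => min δ₀ (n + 1)⁻¹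
  have hr_pos n : 0 < r n := lt_min hδ₀ (by simp)
  have hr_top n : r n ≠ ⊤ := ne_top_of_le_ne_top (by simp) (min_le_right _ _)
  have hr : Tendsto r atTop (𝓝 0) := by
    refine tendsto_of_tendsto_of_tendsto_of_le_of_le tendsto_const_nhds ?_ (fun _ => zero_le)
      fun n => min_le_right _ _
    simpa [Function.comp_def] using
      ENNReal.tendsto_inv_nat_nhds_zero.comp (tendsto_add_atTop_nat 1)
  choose ι _ V hcover hdiam hsum using fun n =>
    exists_prod_cover_tsum_le hs ht hA (hr_pos n) (hr_top n) fun δ hδ =>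
      hBu ⟨hδ.1, hδ.2.trans (min_le_left _ _) |>.trans_lt hδ₀u⟩
  have hCr : Tendsto (fun n => 2 ^ (s + t) * r n) atTop (𝓝 0) := by
    simpa using ENNReal.Tendsto.const_mul hr
      (Or.inr (ENNReal.rpow_ne_top_of_nonneg (by linarith) ENNReal.ofNat_ne_top))
  refine le_antisymm ?_ zero_le
  calc μH[s + t] (A ×ˢ B) ≤ liminf (fun n => ∑' j, ediam (V n j) ^ (s + t)) atTop :=
        Measure.hausdorffMeasure_le_liminf_tsum _ _ (fun n => 2 * r n)
          (by simpa using ENNReal.Tendsto.const_mul hr (Or.inr ENNReal.ofNat_ne_top)) V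
          (Eventually.of_forall hdiam) (Eventually.of_forall hcover)
    _ ≤ liminf (fun n => 2 ^ (s + t) * r n) atTop := liminf_le_liminf (Eventually.of_forall hsum)
    _ = 0 := hCr.liminf_eq

end

theorem dimH_prod_le_add {t : ℝ≥0} {A : Set X} {B : Set Y}
    (hB : ∀ᶠ δ in 𝓝[>] 0, HasBallCover t B δ) : dimH (A ×ˢ B) ≤ dimH A + t := by
  borelize X (X × Y)
  rw [add_comm]
  refine ENNReal.le_add_of_forall_lt_le_add fun s hs => ?_
  have hprod : μH[(s + t : ℝ≥0)] (A ×ˢ B) = 0 :=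
    hausdorffMeasure_prod_eq_zero (by exact_mod_cast pos_of_gt hs) t.coe_nonneg
      (hausdorffMeasure_of_dimH_lt hs) hB
  calc dimH (A ×ˢ B) ≤ ((s + t : ℝ≥0) : ℝ≥0∞) :=
        dimH_le_of_hausdorffMeasure_ne_top (by rw [hprod]; exact ENNReal.zero_ne_top)
    _ = t + s := by rw [ENNReal.coe_add, add_comm]

theorem dimH_add_le_dimH_prod {E : Type*} [MetricSpace E] [AddMonoid E] [LipschitzAdd E]
    (A B : Set E) : dimH (A + B) ≤ dimH (A ×ˢ B) := by
  rw [← Set.add_image_prod]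
  exact lipschitzWith_lipschitz_const_add_edist.dimH_image_le _

theorem exists_finset_of_coverNum_eq {B : Set ℝ} {δ : ℝ} {n : ℕ} (h : coverNum B δ = n) :
    ∃ F : Finset ℝ, #F = n ∧ B ⊆ ⋃ x ∈ F, ball x δ := by
  have hne : {m : ℕ∞ | ∃ F : Finset ℝ, (#F : ℕ∞) = m ∧ B ⊆ ⋃ x ∈ F, ball x δ}.Nonempty := by
    by_contra hemp
    rw [Set.not_nonempty_iff_eq_empty] at hemp
    simp [coverNum, hemp] at h
  obtain ⟨F, hF, hBF⟩ := csInf_mem hne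
  exact ⟨F, by exact_mod_cast hF.trans h, hBF⟩

theorem natCast_le_rpow_neg_of_log_div_log_lt {n : ℕ} {δ t : ℝ} (hδ : 0 < δ) (hδ₁ : δ < 1)
    (h : Real.log n / Real.log (1 / δ) < t) : (n : ℝ) ≤ δ ^ (-t) := by
  rcases n.eq_zero_or_pos with rfl | hn
  · simpa using (Real.rpow_pos_of_pos hδ _).le
  have hlog : 0 < Real.log (1 / δ) := Real.log_pos (one_lt_one_div hδ hδ₁)
  rw [Real.le_rpow_iff_log_le (by exact_mod_cast hn) hδ]
  rw [div_lt_iff₀ hlog, one_div, Real.log_inv] at h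
  linarith

theorem eventually_finset_cover_of_upperBoxDim_lt {B : Set ℝ} {t : ℝ≥0}
    (h : upperBoxDim B < t) :
    ∀ᶠ δ in 𝓝[>] 0, HasBallCover t B δ := by
  have hreal : ∀ᶠ δ in 𝓝[>] (0 : ℝ),
      ∃ F : Finset ℝ, (#F : ℝ) ≤ δ ^ (-(t : ℝ)) ∧ B ⊆ ⋃ y ∈ F, ball y δ := by
    filter_upwards [eventually_lt_of_limsup_lt h, Ioo_mem_nhdsGT one_pos] with δ hδt hδ
    rcases hc : coverNum B δ with _ | n
    · simp [hc] at hδt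
    obtain ⟨F, hF, hBF⟩ := exists_finset_of_coverNum_eq hc
    simp only [hc, ← ENNReal.ofReal_coe_nnreal, ENNReal.ofReal_lt_ofReal_iff'] at hδt
    exact ⟨F, hF ▸ natCast_le_rpow_neg_of_log_div_log_lt hδ.1 hδ.2 hδt.1, hBF⟩
  have hfin : ∀ᶠ δ in 𝓝[>] (0 : ℝ≥0∞), δ < ⊤ :=
    nhdsWithin_le_nhds (Iio_mem_nhds ENNReal.zero_lt_top)
  have htoReal : Tendsto ENNReal.toReal (𝓝[>] 0) (𝓝[>] 0) := by
    refine tendsto_nhdsWithin_iff.2 ⟨?_, ?_⟩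
    · simpa using (ENNReal.tendsto_toReal ENNReal.zero_ne_top).mono_left nhdsWithin_le_nhds
    · filter_upwards [self_mem_nhdsWithin, hfin] with δ hδ hδ_top
      exact ENNReal.toReal_pos hδ.ne' hδ_top.ne
  filter_upwards [htoReal.eventually hreal, self_mem_nhdsWithin, hfin]
    with δ ⟨F, hF, hBF⟩ hδ hδ_top
  rw [← ENNReal.ofReal_toReal hδ_top.ne]
  refine ⟨F, ?_, by simpa only [eball_ofReal] using hBF⟩
  rw [ENNReal.ofReal_rpow_of_pos (ENNReal.toReal_pos hδ.ne' hδ_top.ne), ← ENNReal.ofReal_natCast]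
  exact ENNReal.ofReal_le_ofReal hF

/-- For `A, B ⊆ ℝ`, the Hausdorff dimension of the sumset `A + B` is at most the
Hausdorff dimension of `A` plus the upper Minkowski (box) dimension of `B`. -/
theorem dimH_sumset_le (A B : Set ℝ) :
    dimH (A + B) ≤ dimH A + upperBoxDim B :=
  (dimH_add_le_dimH_prod A B).trans <| ENNReal.le_add_of_forall_lt_le_add fun _ ht =>
    dimH_prod_le_add (eventually_finset_cover_of_upperBoxDim_lt ht)
end

section
/- There exist compact subsets A, B of ℝ with Hausdorff dimension dim_H A = dim_H B = 0 but dim_H(A + B) = 1. -/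
/-!
Split the binary digits of `x ∈ [0, 1]` into those in the blocks `[(2k)!, (2k+1)!)` and the rest:
`x` is then the sum of a number whose digits vanish off these blocks and one whose digits vanish
on them. Each of the two sets of such numbers has digit gaps `[m!, (m+1)!)` for infinitely many
`m`, so it is covered by `2 ^ m!` sets of diameter `2 ^ -(m+1)!`; since `m! = o((m+1)!)`, this
forces its Hausdorff dimension to be zero.
-/

open MeasureTheory Set Filter Topology Asymptotics
open scoped Pointwise ENNReal NNReal Nat

def supportedIn (T : Set ℕ) : Set (ℕ → Fin 2) := Set.pi Tᶜ fun _ => {0}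

noncomputable def binarySet (T : Set ℕ) : Set ℝ := Real.ofDigits '' supportedIn T

theorem isCompact_binarySet (T : Set ℕ) : IsCompact (binarySet T) :=
  (isClosed_set_pi fun _ _ => isClosed_singleton).isCompact.image Real.continuous_ofDigits

theorem Real.ofDigits_piecewise_add_ofDigits_piecewise {b : ℕ} [NeZero b] (T : Set ℕ)
    [DecidablePred (· ∈ T)] (d : ℕ → Fin b) :
    Real.ofDigits (T.piecewise d 0) + Real.ofDigits (Tᶜ.piecewise d 0) = Real.ofDigits d := by
  rw [Real.ofDigits, Real.ofDigits, ← Summable.tsum_add Real.summable_ofDigitsTerm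
    Real.summable_ofDigitsTerm]
  refine tsum_congr fun i => ?_
  by_cases hi : i ∈ T <;> simp [Real.ofDigitsTerm, hi]

theorem Icc_subset_binarySet_add_binarySet_compl (T : Set ℕ) :
    Icc 0 1 ⊆ binarySet T + binarySet Tᶜ := by
  classical
  intro x hx
  obtain ⟨d, -, rfl⟩ := Real.ofDigits_SurjOn one_lt_two hx
  refine ⟨_, ⟨T.piecewise d 0, fun i hi => ?_, rfl⟩,
    _, ⟨Tᶜ.piecewise d 0, fun i hi => ?_, rfl⟩,
    Real.ofDigits_piecewise_add_ofDigits_piecewise T d⟩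
  · simp [piecewise_eq_of_notMem _ _ _ hi]
  · simp [piecewise_eq_of_notMem _ _ _ hi]

section Gaps

variable {T : Set ℕ}

/-- If `T` has no element in `[c, n)`, then two digit sequences supported in `T` that agree
below `c` agree below `n`. -/
theorem ediam_ofDigits_image_cylinder_le {c n : ℕ} (hgap : ∀ i ∈ T, i < n → i < c)
    (σ : Fin c → Fin 2) :
    Metric.ediam (Real.ofDigits '' (supportedIn T ∩ {d | ∀ i : Fin c, d i = σ i})) ≤
      ENNReal.ofReal (2 ^ (-(n : ℝ))) := by
  refine Metric.ediam_le ?_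
  rintro _ ⟨x, ⟨hxT, hxσ⟩, rfl⟩ _ ⟨y, ⟨hyT, hyσ⟩, rfl⟩
  rw [edist_dist, Real.dist_eq]
  refine ENNReal.ofReal_le_ofReal
    ((Real.abs_ofDigits_sub_ofDigits_le (n := n) fun i hi => ?_).trans_eq ?_)
  · by_cases hic : i < c
    · exact (hxσ ⟨i, hic⟩).trans (hyσ ⟨i, hic⟩).symm
    · have hiT : i ∉ T := fun hiT => hic (hgap i hiT hi)
      exact (hxT i hiT).trans (hyT i hiT).symm
  · rw [Real.rpow_neg zero_le_two, Real.rpow_natCast, Nat.cast_ofNat]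

theorem tendsto_sub_mul_atBot_of_isLittleO {c n : ℕ → ℕ} (hn : Tendsto n atTop atTop)
    (hcn : (fun k => (c k : ℝ)) =o[atTop] fun k => (n k : ℝ)) {s : ℝ} (hs : 0 < s) :
    Tendsto (fun k => (c k : ℝ) - s * n k) atTop atBot := by
  refine tendsto_atBot_mono' atTop ?_
    ((tendsto_natCast_atTop_atTop.comp hn).const_mul_atTop_of_neg (neg_lt_zero.2 (half_pos hs)))
  filter_upwards [isLittleO_iff.1 hcn (half_pos hs)] with k hk
  simp only [Real.norm_natCast] at hk
  simp only [Function.comp_apply]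
  linarith

theorem hausdorffMeasure_binarySet_eq_zero {c n : ℕ → ℕ} (hn : Tendsto n atTop atTop)
    (hcn : (fun k => (c k : ℝ)) =o[atTop] fun k => (n k : ℝ))
    (hgap : ∀ k, ∀ i ∈ T, i < n k → i < c k) {s : ℝ} (hs : 0 < s) :
    μH[s] (binarySet T) = 0 := by
  set t : ∀ k, (Fin (c k) → Fin 2) → Set ℝ := fun k σ =>
    Real.ofDigits '' (supportedIn T ∩ {d | ∀ i : Fin (c k), d i = σ i})
  have hcover : ∀ k, binarySet T ⊆ ⋃ σ, t k σ := by
    rintro k _ ⟨d, hd, rfl⟩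
    exact mem_iUnion.2 ⟨fun i => d i, d, ⟨hd, fun _ => rfl⟩, rfl⟩
  have hdiam : ∀ k σ, Metric.ediam (t k σ) ≤ ENNReal.ofReal (2 ^ (-(n k : ℝ))) :=
    fun k => ediam_ofDigits_image_cylinder_le (hgap k)
  have hr : Tendsto (fun k => ENNReal.ofReal (2 ^ (-(n k : ℝ)))) atTop (𝓝 0) := by
    simpa using ENNReal.tendsto_ofReal ((tendsto_rpow_atBot_of_base_gt_one 2 one_lt_two).comp
      (tendsto_neg_atTop_atBot.comp (tendsto_natCast_atTop_atTop.comp hn)))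
  have hsum : ∀ k, ∑ σ, Metric.ediam (t k σ) ^ s ≤
      ENNReal.ofReal (2 ^ ((c k : ℝ) - s * n k)) := by
    intro k
    calc ∑ σ, Metric.ediam (t k σ) ^ s
        ≤ ∑ _σ : Fin (c k) → Fin 2, ENNReal.ofReal (2 ^ (-(n k : ℝ))) ^ s :=
          Finset.sum_le_sum fun σ _ => ENNReal.rpow_le_rpow (hdiam k σ) hs.le
      _ = ENNReal.ofReal (2 ^ ((c k : ℝ) - s * n k)) := by
          rw [Finset.sum_const, Finset.card_univ, Fintype.card_fun, Fintype.card_fin,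
            Fintype.card_fin, nsmul_eq_mul, ENNReal.ofReal_rpow_of_nonneg (by positivity) hs.le,
            ← Real.rpow_mul zero_le_two, sub_eq_add_neg, Real.rpow_add zero_lt_two,
            ENNReal.ofReal_mul (by positivity), Real.rpow_natCast]
          norm_num [ENNReal.ofReal_pow, mul_comm]
  have hlim : Tendsto (fun k => ENNReal.ofReal (2 ^ ((c k : ℝ) - s * n k))) atTop (𝓝 0) := by
    simpa using ENNReal.tendsto_ofReal ((tendsto_rpow_atBot_of_base_gt_one 2 one_lt_two).comp
      (tendsto_sub_mul_atBot_of_isLittleO hn hcn hs))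
  refine le_antisymm ?_ zero_le
  calc μH[s] (binarySet T) ≤ liminf (fun k => ∑ σ, Metric.ediam (t k σ) ^ s) atTop :=
        Measure.hausdorffMeasure_le_liminf_sum s _ _ hr t (.of_forall hdiam) (.of_forall hcover)
    _ ≤ liminf (fun k => ENNReal.ofReal (2 ^ ((c k : ℝ) - s * n k))) atTop :=
        liminf_le_liminf (.of_forall hsum)
    _ = 0 := hlim.liminf_eq

theorem dimH_binarySet_eq_zero {c n : ℕ → ℕ} (hn : Tendsto n atTop atTop)
    (hcn : (fun k => (c k : ℝ)) =o[atTop] fun k => (n k : ℝ))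
    (hgap : ∀ k, ∀ i ∈ T, i < n k → i < c k) :
    dimH (binarySet T) = 0 := by
  refine le_antisymm (ENNReal.le_of_forall_pos_le_add fun s hs _ => ?_) zero_le
  rw [zero_add]
  refine dimH_le_of_hausdorffMeasure_ne_top ?_
  rw [hausdorffMeasure_binarySet_eq_zero hn hcn hgap (NNReal.coe_pos.2 hs)]
  exact ENNReal.zero_ne_top

end Gaps

def evenFactorialBlocks : Set ℕ := ⋃ k, Ico (2 * k)! (2 * k + 1)!

theorem lt_factorial_of_mem_evenFactorialBlocks {k i : ℕ} (hi : i ∈ evenFactorialBlocks)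
    (hlt : i < (2 * k + 2)!) : i < (2 * k + 1)! := by
  obtain ⟨j, hj₁, hj₂⟩ := mem_iUnion.1 hi
  rcases le_or_gt j k with hjk | hkj
  · exact hj₂.trans_le (Nat.monotone_factorial (by omega))
  · exact absurd (hlt.trans_le (Nat.monotone_factorial (by omega))) hj₁.not_gt

theorem lt_factorial_of_mem_evenFactorialBlocks_compl {k i : ℕ}
    (hi : i ∈ evenFactorialBlocksᶜ) (hlt : i < (2 * k + 1)!) : i < (2 * k)! :=
  not_le.1 fun hle => hi (mem_iUnion.2 ⟨k, hle, hlt⟩)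

theorem factorial_isLittleO_factorial_succ :
    (fun j : ℕ => (j ! : ℝ)) =o[atTop] fun j => ((j + 1)! : ℝ) := by
  refine isLittleO_iff.2 fun ε hε => ?_
  obtain ⟨J, hJ⟩ := exists_nat_ge ε⁻¹
  filter_upwards [eventually_ge_atTop J] with j hj
  have hj' : 1 ≤ ε * (j + 1) := by
    rw [← inv_le_iff_one_le_mul₀' hε]
    exact hJ.trans (by exact_mod_cast hj.trans (Nat.le_succ j))
  rw [Real.norm_natCast, Real.norm_natCast, Nat.factorial_succ, Nat.cast_mul]
  push_cast
  nlinarith [(Nat.cast_pos.2 (Nat.factorial_pos j) : (0 : ℝ) < j !)]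

theorem tendsto_two_mul_add_atTop (a : ℕ) : Tendsto (fun k => 2 * k + a) atTop atTop :=
  tendsto_atTop_mono (fun k => show k ≤ 2 * k + a by omega) tendsto_id

theorem dimH_binarySet_evenFactorialBlocks : dimH (binarySet evenFactorialBlocks) = 0 :=
  dimH_binarySet_eq_zero (c := fun k => (2 * k + 1)!) (n := fun k => (2 * k + 2)!)
    (factorial_tendsto_atTop.comp (tendsto_two_mul_add_atTop 2))
    (factorial_isLittleO_factorial_succ.comp_tendsto (tendsto_two_mul_add_atTop 1))
    fun _ _ => lt_factorial_of_mem_evenFactorialBlocks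

theorem dimH_binarySet_evenFactorialBlocks_compl : dimH (binarySet evenFactorialBlocksᶜ) = 0 :=
  dimH_binarySet_eq_zero (c := fun k => (2 * k)!) (n := fun k => (2 * k + 1)!)
    (factorial_tendsto_atTop.comp (tendsto_two_mul_add_atTop 1))
    (factorial_isLittleO_factorial_succ.comp_tendsto (tendsto_two_mul_add_atTop 0))
    fun _ _ => lt_factorial_of_mem_evenFactorialBlocks_compl

/-- There exist compact sets `A, B ⊆ ℝ` of Hausdorff dimension zero whose sumset has
Hausdorff dimension one. -/
theorem exists_compact_dimH_zero_sumset_dimH_one :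
    ∃ A B : Set ℝ, IsCompact A ∧ IsCompact B ∧
      dimH A = 0 ∧ dimH B = 0 ∧ dimH (A + B) = 1 := by
  refine ⟨_, _, isCompact_binarySet evenFactorialBlocks,
    isCompact_binarySet evenFactorialBlocksᶜ,
    dimH_binarySet_evenFactorialBlocks, dimH_binarySet_evenFactorialBlocks_compl, ?_⟩
  refine le_antisymm ((dimH_mono (subset_univ _)).trans_eq Real.dimH_univ) ?_
  calc (1 : ℝ≥0∞) = dimH (Icc (0 : ℝ) 1) := by
        rw [Real.dimH_of_nonempty_interior (by simp), Module.finrank_self, Nat.cast_one]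
    _ ≤ _ := dimH_mono (Icc_subset_binarySet_add_binarySet_compl _)
end

section
/- A vector x ∈ ℓ¹(ℤ) is cyclic in ℓ¹(ℤ) (i.e., the closed linear span of its translates is all of ℓ¹(ℤ)) if and only if its Fourier transform x̂(t) = ∑_k x_k e^{ikt} has no zeros on the circle. -/
open Complex

/-- `x` is a cyclic vector in `ℓᵖ(ℤ)`: the closed linear span of the translates
`(x_{k-m})_k`, `m ∈ ℤ`, is all of `ℓᵖ(ℤ)`. -/
def IsCyclicVector (p : ENNReal) [Fact (1 ≤ p)] (x : ℤ → ℂ) : Prop :=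
  Dense (↑(Submodule.span ℂ
    {y : lp (fun _ : ℤ => ℂ) p | ∃ m : ℤ, ∀ k : ℤ, (y : ℤ → ℂ) k = x (k - m)}) :
    Set (lp (fun _ : ℤ => ℂ) p))

/-!
Under convolution, `ℓ¹(ℤ)` is a unital commutative Banach algebra in which the translate of `x`
by `m` is `δ m * x`. If `x` is invertible, multiplication by `x` is a homeomorphism carrying the
dense span of the point masses `δ m` onto the span of the translates of `x`. If `x` is not
invertible, Gelfand theory gives a character `φ` with `φ x = 0`; since `‖φ‖ ≤ 1` and `δ 1` is
invertible with `‖δ 1‖ = ‖δ (-1)‖ = 1`, the number `z = φ (δ 1)` is unimodular, so `z = e^{it}` and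
`φ` is evaluation of the Fourier transform at `t`. Conversely, if `x̂(t) = 0`, then `f ↦ f̂(t)` is
a continuous functional vanishing on every translate of `x` but not on `δ 0 = 1`.
-/

open scoped lp

noncomputable section

namespace Ell1

section

variable {α E : Type*} [NormedAddCommGroup E]

theorem summable_norm (f : ℓ¹(α, E)) : Summable fun i => ‖f i‖ := by
  simpa using (lp.memℓp f).summable (p := 1) (by norm_num)

theorem norm_eq_tsum_norm (f : ℓ¹(α, E)) : ‖f‖ = ∑' i, ‖f i‖ := by
  simpa using lp.norm_eq_tsum_rpow (p := 1) (by norm_num) f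

end

section Convolution

variable {G 𝕜 : Type*} [NormedField 𝕜]

open Classical in
def δ (g : G) : ℓ¹(G, 𝕜) := lp.single 1 g 1

theorem δ_apply_self (g : G) : (δ g : ℓ¹(G, 𝕜)) g = 1 := by
  classical exact lp.single_apply_self _ _ _

theorem δ_apply_of_ne {g k : G} (h : k ≠ g) : (δ g : ℓ¹(G, 𝕜)) k = 0 := by
  classical exact lp.single_apply_ne _ _ _ h

theorem norm_δ (g : G) : ‖(δ g : ℓ¹(G, 𝕜))‖ = 1 := by
  classical exact (lp.norm_single (E := fun _ : G => 𝕜) zero_lt_one g 1).trans norm_one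

theorem hasSum_smul_δ (f : ℓ¹(G, 𝕜)) : HasSum (fun g => f g • δ g) f := by
  classical
  refine (lp.hasSum_single ENNReal.one_ne_top f).congr_fun fun g => ?_
  rw [δ, ← lp.single_smul, smul_eq_mul, mul_one]

theorem dense_span_range_δ :
    Dense (Submodule.span 𝕜 (Set.range (δ : G → ℓ¹(G, 𝕜))) : Set ℓ¹(G, 𝕜)) :=
  fun f => mem_closure_of_tendsto (hasSum_smul_δ f) <| .of_forall fun _ =>
    Submodule.sum_mem _ fun g _ => Submodule.smul_mem _ _ (Submodule.subset_span ⟨g, rfl⟩)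

variable [AddCommGroup G]

/-- `(k, j) ↦ (j, k - j)` turns the convolution array `f j * g (k - j)` into the product
array `f a * g b`. -/
def convEquiv : G × G ≃ G × G where
  toFun q := (q.2, q.1 - q.2)
  invFun q := (q.1 + q.2, q.1)
  left_inv q := by simp
  right_inv q := by simp

theorem summable_norm_conv (f g : ℓ¹(G, 𝕜)) :
    Summable fun q : G × G => ‖f q.2 * g (q.1 - q.2)‖ :=
  (convEquiv.summable_iff (f := fun q : G × G => ‖f q.1 * g q.2‖)).2
    ((summable_norm f).mul_norm (summable_norm g))

theorem tsum_norm_conv (f g : ℓ¹(G, 𝕜)) :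
    ∑' q : G × G, ‖f q.2 * g (q.1 - q.2)‖ = ‖f‖ * ‖g‖ := by
  rw [norm_eq_tsum_norm f, norm_eq_tsum_norm g,
    tsum_mul_tsum_of_summable_norm (by simpa using summable_norm f)
      (by simpa using summable_norm g),
    ← convEquiv.tsum_eq (fun q : G × G => ‖f q.1‖ * ‖g q.2‖)]
  simp [convEquiv]

theorem memℓp_conv (f g : ℓ¹(G, 𝕜)) : Memℓp (fun k => ∑' j, f j * g (k - j)) 1 := by
  refine memℓp_gen ?_
  simp only [ENNReal.toReal_one, Real.rpow_one]
  exact .of_nonneg_of_le (fun k => norm_nonneg _)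
    (fun k => norm_tsum_le_tsum_norm ((summable_norm_conv f g).prod_factor k))
    (summable_norm_conv f g).prod

instance : Mul ℓ¹(G, 𝕜) := ⟨fun f g => ⟨fun k => ∑' j, f j * g (k - j), memℓp_conv f g⟩⟩

instance : One ℓ¹(G, 𝕜) := ⟨δ 0⟩

theorem mul_apply (f g : ℓ¹(G, 𝕜)) (k : G) : (f * g) k = ∑' j, f j * g (k - j) := rfl

theorem one_def : (1 : ℓ¹(G, 𝕜)) = δ 0 := rfl

theorem δ_mul_apply (g : G) (f : ℓ¹(G, 𝕜)) (k : G) : (δ g * f : ℓ¹(G, 𝕜)) k = f (k - g) := by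
  rw [mul_apply, tsum_eq_single g fun j hj => by rw [δ_apply_of_ne hj, zero_mul],
    δ_apply_self, one_mul]

theorem δ_add (g h : G) : (δ (g + h) : ℓ¹(G, 𝕜)) = δ g * δ h := by
  ext k
  rw [δ_mul_apply]
  rcases eq_or_ne k (g + h) with rfl | hk
  · rw [δ_apply_self, add_sub_cancel_left, δ_apply_self]
  · rw [δ_apply_of_ne hk, δ_apply_of_ne fun e => hk (sub_eq_iff_eq_add'.1 e)]

theorem setOf_translates_eq_range (x : ℓ¹(G, 𝕜)) :
    {y : ℓ¹(G, 𝕜) | ∃ m : G, ∀ k : G, y k = x (k - m)} = Set.range fun m => δ m * x := by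
  ext y
  simp only [Set.mem_ofPred_eq, Set.mem_range, eq_comm (b := y), lp.ext_iff, funext_iff,
    δ_mul_apply]

protected theorem mul_comm (f g : ℓ¹(G, 𝕜)) : f * g = g * f := by
  ext k
  rw [mul_apply, mul_apply, ← (Equiv.subLeft k).tsum_eq]
  simp [mul_comm]

protected theorem one_mul (f : ℓ¹(G, 𝕜)) : 1 * f = f := by
  ext k
  rw [one_def, δ_mul_apply, sub_zero]

protected theorem zero_mul (f : ℓ¹(G, 𝕜)) : 0 * f = 0 := by
  ext k
  simp [mul_apply]

theorem norm_mul_le (f g : ℓ¹(G, 𝕜)) : ‖f * g‖ ≤ ‖f‖ * ‖g‖ := by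
  rw [norm_eq_tsum_norm, ← tsum_norm_conv, (summable_norm_conv f g).tsum_prod]
  exact (summable_norm _).tsum_le_tsum
    (fun k => norm_tsum_le_tsum_norm ((summable_norm_conv f g).prod_factor k))
    (summable_norm_conv f g).prod

variable [CompleteSpace 𝕜]

theorem summable_conv (f g : ℓ¹(G, 𝕜)) (k : G) : Summable fun j => f j * g (k - j) :=
  ((summable_norm_conv f g).prod_factor k).of_norm

protected theorem mul_add (f g h : ℓ¹(G, 𝕜)) : f * (g + h) = f * g + f * h := by
  ext k
  simp only [mul_apply, lp.coeFn_add, Pi.add_apply, mul_add]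
  exact (summable_conv f g k).tsum_add (summable_conv f h k)

protected theorem mul_assoc (f g h : ℓ¹(G, 𝕜)) : f * g * h = f * (g * h) := by
  ext k
  have hs : Summable (Function.uncurry fun j i => f i * g (j - i) * h (k - j)) := by
    refine .of_norm <| .of_nonneg_of_le (fun _ => norm_nonneg _) (fun q => ?_)
      ((summable_norm_conv f g).mul_right ‖h‖)
    rw [Function.uncurry_apply_pair, norm_mul]
    gcongr
    exact lp.norm_apply_le_norm one_ne_zero h _
  calc (f * g * h) k = ∑' (j) (i), f i * g (j - i) * h (k - j) := by
        simp only [mul_apply, ← tsum_mul_right]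
    _ = ∑' (i) (j), f i * g (j - i) * h (k - j) := hs.tsum_comm.symm
    _ = ∑' i, f i * ∑' l, g l * h (k - i - l) := tsum_congr fun i => by
        rw [← tsum_mul_left, ← (Equiv.addLeft i).tsum_eq]
        simp [mul_assoc, sub_add_eq_sub_sub]
    _ = (f * (g * h)) k := rfl

instance commRing : CommRing ℓ¹(G, 𝕜) where
  mul_assoc := Ell1.mul_assoc
  one_mul := Ell1.one_mul
  mul_one f := by rw [Ell1.mul_comm, Ell1.one_mul]
  left_distrib := Ell1.mul_add
  right_distrib f g h := by rw [Ell1.mul_comm, Ell1.mul_add, Ell1.mul_comm h, Ell1.mul_comm h]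
  zero_mul := Ell1.zero_mul
  mul_zero f := by rw [Ell1.mul_comm, Ell1.zero_mul]
  mul_comm := Ell1.mul_comm

instance normedCommRing : NormedCommRing ℓ¹(G, 𝕜) :=
  { commRing, (inferInstance : NormedAddCommGroup ℓ¹(G, 𝕜)) with norm_mul_le }

instance : NormOneClass ℓ¹(G, 𝕜) := ⟨norm_δ 0⟩

theorem smul_mul (c : 𝕜) (f g : ℓ¹(G, 𝕜)) : c • f * g = c • (f * g) := by
  ext k
  simp only [mul_apply, lp.coeFn_smul, Pi.smul_apply, smul_eq_mul, ← tsum_mul_left, mul_assoc]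

instance normedAlgebra : NormedAlgebra 𝕜 ℓ¹(G, 𝕜) :=
  { Algebra.ofModule smul_mul fun c f g => by rw [mul_comm, smul_mul, mul_comm] with
    norm_smul_le := norm_smul_le }

theorem dense_span_translates_of_isUnit {x : ℓ¹(G, 𝕜)} (hx : IsUnit x) :
    Dense (Submodule.span 𝕜 (Set.range fun m => δ m * x) : Set ℓ¹(G, 𝕜)) := by
  rw [show (Set.range fun m => δ m * x) = LinearMap.mulRight 𝕜 x '' Set.range δ from
    Set.range_comp (LinearMap.mulRight 𝕜 x) δ, Submodule.span_image, Submodule.map_coe]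
  refine DenseRange.dense_image (Function.Surjective.denseRange fun y => ⟨y * ↑hx.unit⁻¹, ?_⟩)
    (continuous_mul_const x) dense_span_range_δ
  rw [LinearMap.mulRight_apply, mul_assoc, IsUnit.val_inv_mul, mul_one]

end Convolution

section Characters

variable {G 𝕜 : Type*} [AddCommGroup G] [NontriviallyNormedField 𝕜] [CompleteSpace 𝕜]

def addCharOfCharacter (φ : WeakDual.characterSpace 𝕜 ℓ¹(G, 𝕜)) : AddChar G 𝕜 where
  toFun g := φ (δ g)
  map_zero_eq_one' := by rw [← one_def, map_one]
  map_add_eq_mul' g h := by rw [δ_add, map_mul]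

theorem addCharOfCharacter_apply (φ : WeakDual.characterSpace 𝕜 ℓ¹(G, 𝕜)) (g : G) :
    addCharOfCharacter φ g = φ (δ g) := rfl

theorem norm_addCharOfCharacter (φ : WeakDual.characterSpace 𝕜 ℓ¹(G, 𝕜)) (g : G) :
    ‖addCharOfCharacter φ g‖ = 1 := by
  have hinv : φ (δ g) * φ (δ (-g)) = 1 := by
    rw [← map_mul, ← δ_add, add_neg_cancel, ← one_def, map_one]
  have hle (g : G) : ‖φ (δ g)‖ ≤ 1 := (AlgHom.norm_apply_le_self φ _).trans_eq (norm_δ g)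
  refine le_antisymm (hle g) ?_
  calc 1 = ‖φ (δ g)‖ * ‖φ (δ (-g))‖ := by rw [← norm_mul, hinv, norm_one]
    _ ≤ ‖φ (δ g)‖ := mul_le_of_le_one_right (norm_nonneg _) (hle (-g))

theorem character_apply_eq_tsum (φ : WeakDual.characterSpace 𝕜 ℓ¹(G, 𝕜)) (f : ℓ¹(G, 𝕜)) :
    φ f = ∑' g, f g * addCharOfCharacter φ g := by
  refine ((hasSum_smul_δ f).mapL (WeakDual.CharacterSpace.toCLM φ)).tsum_eq.symm.trans
    (tsum_congr fun g => ?_)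
  simp [addCharOfCharacter_apply]

end Characters

theorem norm_exp_I_mul_intCast_mul (k : ℤ) (t : ℝ) : ‖exp (I * k * t)‖ = 1 := by
  simpa [mul_assoc] using norm_exp_I_mul_ofReal (k * t)

def fourierEval (t : ℝ) : ℓ¹(ℤ, ℂ) →L[ℂ] ℂ :=
  lp.tsumCLM ℂ ℤ ℂ ∘L lp.mapCLM 1 (fun k => exp (I * k * t) • ContinuousLinearMap.id ℂ ℂ)
    zero_le_one fun k => by
      rw [norm_smul, norm_exp_I_mul_intCast_mul, one_mul]
      exact ContinuousLinearMap.norm_id_le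

theorem fourierEval_apply (t : ℝ) (f : ℓ¹(ℤ, ℂ)) :
    fourierEval t f = ∑' k, f k * exp (I * k * t) := by
  simp [fourierEval, mul_comm]

theorem fourierEval_one (t : ℝ) : fourierEval t 1 = 1 := by
  rw [fourierEval_apply, one_def,
    tsum_eq_single 0 fun k hk => by rw [δ_apply_of_ne hk, zero_mul], δ_apply_self]
  simp

theorem fourierEval_δ_mul (t : ℝ) (m : ℤ) (f : ℓ¹(ℤ, ℂ)) :
    fourierEval t (δ m * f) = exp (I * m * t) * fourierEval t f := by
  rw [fourierEval_apply, fourierEval_apply, ← tsum_mul_left, ← (Equiv.addRight m).tsum_eq]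
  refine tsum_congr fun k => ?_
  rw [Equiv.coe_addRight, δ_mul_apply, add_sub_cancel_right, Int.cast_add, mul_add, add_mul,
    exp_add]
  ring

theorem fourierEval_ne_zero_of_dense {x : ℓ¹(ℤ, ℂ)}
    (hx : Dense (Submodule.span ℂ (Set.range fun m => δ m * x) : Set ℓ¹(ℤ, ℂ))) (t : ℝ) :
    fourierEval t x ≠ 0 := by
  intro h0
  have hzero : fourierEval t = 0 := ContinuousLinearMap.ext_on hx <| by
    rintro _ ⟨m, rfl⟩
    simp [fourierEval_δ_mul, h0]
  simpa [fourierEval_one] using DFunLike.congr_fun hzero 1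

theorem exists_eq_fourierEval (φ : WeakDual.characterSpace ℂ ℓ¹(ℤ, ℂ)) :
    ∃ t : ℝ, ∀ f, φ f = fourierEval t f := by
  obtain ⟨t, ht⟩ := (norm_eq_one_iff _).1 (norm_addCharOfCharacter φ 1)
  refine ⟨t, fun f => ?_⟩
  have hψ (k : ℤ) : addCharOfCharacter φ k = exp (I * k * t) :=
    calc addCharOfCharacter φ k = addCharOfCharacter φ (k • 1) := by rw [zsmul_one, Int.cast_id]
      _ = exp (t * I) ^ k := by rw [AddChar.map_zsmul_eq_zpow, ht]
      _ = exp (I * k * t) := by rw [← exp_int_mul]; ring_nf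
  simp only [character_apply_eq_tsum, fourierEval_apply, hψ]

theorem isUnit_of_fourierEval_ne_zero {x : ℓ¹(ℤ, ℂ)} (hx : ∀ t, fourierEval t x ≠ 0) :
    IsUnit x := by
  by_contra hnx
  obtain ⟨φ, hφ⟩ := WeakDual.CharacterSpace.exists_apply_eq_zero hnx
  obtain ⟨t, ht⟩ := exists_eq_fourierEval φ
  exact hx t (ht x ▸ hφ)

end Ell1

end

/-- Wiener's theorem: `x ∈ ℓ¹(ℤ)` is cyclic in `ℓ¹(ℤ)` iff its Fourier transform
`x̂(t) = ∑_k x_k e^{ikt}` has no zeros. -/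
theorem wiener_l1_cyclic (x : lp (fun _ : ℤ => ℂ) 1) :
    IsCyclicVector 1 (x : ℤ → ℂ) ↔
      ∀ t : ℝ, (∑' k : ℤ, (x : ℤ → ℂ) k * Complex.exp (Complex.I * k * t)) ≠ 0 := by
  rw [IsCyclicVector, Ell1.setOf_translates_eq_range]
  simp only [← Ell1.fourierEval_apply]
  exact ⟨fun hx t => Ell1.fourierEval_ne_zero_of_dense hx t,
    fun hx => Ell1.dense_span_translates_of_isUnit (Ell1.isUnit_of_fourierEval_ne_zero hx)⟩
end

section
/- There exists a nonzero Borel measure μ on the circle, supported on a compact set of Lebesgue measure zero, whose Fourier coefficients μ̂(n) tend to 0 as |n| → ∞. -/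
open MeasureTheory Complex Filter

instance : Fact (0 < 2 * Real.pi) := ⟨Real.two_pi_pos⟩

/-!
Let `t = ∑ ω j / (j + 2)!` with independent digits `ω j` uniform on `{0, …, j}`, and let `ν` be
the law of `2π t` on the circle. The first `m` digits confine `t` to `m !` intervals of length
`1 / (m + 1)!`, so `ν` lives on a compact null set. By independence, `ν̂ n` is the limit of the
products over `j < m` of the averages of `𝐞 (-n e / (j + 2)!)` over `e ≤ j`, each of modulus at
most `1`. If all factors with `j ≥ J` were larger than `ε ≫ 1 / J`, the geometric sum formula would
make the distance from `n / (j + 1)!` to `ℤ` at least double at each step down in `j`; starting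
where `|n| / (j + 1)!` first drops below `1 / 2`, this is impossible for `|n|` large.
-/

open Finset Real ProbabilityTheory Topology
open scoped Nat FourierTransform

noncomputable section
namespace Menshov

lemma norm_fourierChar_sub_one (x : ℝ) : ‖(𝐞 x : ℂ) - 1‖ = 2 * |Real.sin (π * x)| := by
  rw [Real.fourierChar_apply, mul_comm, norm_exp_I_mul_ofReal_sub_one, norm_mul,
    Real.norm_two, Real.norm_eq_abs]
  ring_nf

lemma four_mul_abs_le_norm_fourierChar_sub_one {x : ℝ} (hx : |x| ≤ 1 / 2) :
    4 * |x| ≤ ‖(𝐞 x : ℂ) - 1‖ := by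
  have h := mul_abs_le_abs_sin (x := π * x) (by
    rw [abs_mul, abs_of_pos pi_pos]; nlinarith [pi_pos])
  rw [abs_mul, abs_of_pos pi_pos] at h
  field_simp at h
  rw [norm_fourierChar_sub_one]
  linarith

lemma norm_fourierChar_sub_one_le_two (x : ℝ) : ‖(𝐞 x : ℂ) - 1‖ ≤ 2 := by
  simpa [Circle.norm_coe, one_add_one_eq_two] using norm_sub_le (𝐞 x : ℂ) 1

lemma norm_fourierChar_sub_sub_one_le (x y : ℝ) :
    ‖(𝐞 (x - y) : ℂ) - 1‖ ≤ ‖(𝐞 x : ℂ) - 1‖ + ‖(𝐞 y : ℂ) - 1‖ := by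
  have : (𝐞 (x - y) : ℂ) - 1 = (𝐞 (x - y) : ℂ) * (1 - 𝐞 y) + ((𝐞 x : ℂ) - 1) := by
    rw [mul_sub, ← Circle.coe_mul, ← AddChar.map_add_eq_mul, sub_add_cancel]; ring
  rw [this, add_comm]
  refine (norm_add_le _ _).trans ?_
  rw [norm_mul, Circle.norm_coe, one_mul, norm_sub_rev 1]

/-- The modulus of the average of `𝐞 (e * x / (j + 2)!)` over `e ≤ j`; the Fourier coefficient
`ν̂ n` has modulus at most `∏ j, digitFactor j (-n)`. -/
def digitFactor (j : ℕ) (x : ℝ) : ℝ :=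
  ‖∑ e ∈ range (j + 1), (𝐞 (x / (j + 2)!) : ℂ) ^ e‖ / (j + 1)

lemma digitFactor_nonneg (j : ℕ) (x : ℝ) : 0 ≤ digitFactor j x := by
  unfold digitFactor; positivity

lemma digitFactor_le_one (j : ℕ) (x : ℝ) : digitFactor j x ≤ 1 := by
  rw [digitFactor, div_le_one (by positivity)]
  refine (norm_sum_le _ _).trans ?_
  simp [← Circle.coe_pow, Circle.norm_coe]

lemma div_factorial_sub_div_factorial_succ (x : ℝ) (j : ℕ) :
    x / (j + 1)! - x / (j + 2)! = (j + 1) * (x / (j + 2)!) := by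
  rw [Nat.factorial_succ (j + 1)]
  push_cast
  field_simp
  ring

lemma mul_digitFactor_mul_norm_fourierChar_sub_one (j : ℕ) (x : ℝ) :
    (j + 1) * digitFactor j x * ‖(𝐞 (x / (j + 2)!) : ℂ) - 1‖
      = ‖(𝐞 (x / (j + 1)! - x / (j + 2)!) : ℂ) - 1‖ := by
  rw [digitFactor, mul_div_cancel₀ _ (by positivity), ← norm_mul, geom_sum_mul,
    div_factorial_sub_div_factorial_succ, ← Circle.coe_pow, ← AddChar.map_nsmul_eq_pow,
    nsmul_eq_mul]
  push_cast
  rfl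

/-- With `‖𝐞 y - 1‖` measuring the distance from `y` to `ℤ`: a large factor forces the distance of
`x / (j + 1)!` to `ℤ` to be at least twice that of `x / (j + 2)!`, because the geometric sum
defining the factor has ratio `𝐞 (x / (j + 2)!)`. -/
lemma two_mul_norm_fourierChar_sub_one_le {j : ℕ} {x ε : ℝ} (hε : 3 ≤ (j + 1) * ε)
    (hfactor : ε < digitFactor j x) :
    2 * ‖(𝐞 (x / (j + 2)!) : ℂ) - 1‖ ≤ ‖(𝐞 (x / (j + 1)!) : ℂ) - 1‖ := by
  set c := ‖(𝐞 (x / (j + 2)!) : ℂ) - 1‖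
  have hc : 0 ≤ c := norm_nonneg _
  have := calc
    3 * c ≤ (j + 1) * ε * c := by gcongr
    _ ≤ (j + 1) * digitFactor j x * c := by gcongr
    _ ≤ ‖(𝐞 (x / (j + 1)!) : ℂ) - 1‖ + c := by
      rw [mul_digitFactor_mul_norm_fourierChar_sub_one]
      exact norm_fourierChar_sub_sub_one_le _ _
  linarith

lemma two_pow_mul_norm_fourierChar_sub_one_le {J : ℕ} {x ε : ℝ} (hε : 3 ≤ (J + 1) * ε)
    (hfactor : ∀ j, ε < digitFactor j x) (k : ℕ) :
    2 ^ k * ‖(𝐞 (x / (J + k + 1)!) : ℂ) - 1‖ ≤ ‖(𝐞 (x / (J + 1)!) : ℂ) - 1‖ := by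
  induction k with
  | zero => simp
  | succ k ih =>
    have hε' : 3 ≤ ((J + k : ℕ) + 1 : ℝ) * ε := by
      have : 0 ≤ ε := by nlinarith
      push_cast
      nlinarith
    have := two_mul_norm_fourierChar_sub_one_le hε' (hfactor (J + k))
    calc (2 : ℝ) ^ (k + 1) * ‖(𝐞 (x / (J + (k + 1) + 1)!) : ℂ) - 1‖
        = 2 ^ k * (2 * ‖(𝐞 (x / (J + k + 2)!) : ℂ) - 1‖) := by ring_nf
      _ ≤ 2 ^ k * ‖(𝐞 (x / (J + k + 1)!) : ℂ) - 1‖ := by gcongr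
      _ ≤ _ := ih

lemma exists_abs_div_factorial_mem {x : ℝ} {K : ℕ} (hK : 1 ≤ K) (hx : (K ! : ℝ) ≤ |x|) :
    ∃ k, K ≤ k ∧ 1 / (2 * (k + 1)) < |x| / (k + 1)! ∧ |x| / (k + 1)! ≤ 1 / 2 := by
  have hex : ∃ k, |x| / (k + 1)! ≤ 1 / 2 := by
    obtain ⟨k, hk⟩ := exists_nat_ge (2 * |x|)
    refine ⟨k, (div_le_iff₀ (by positivity)).2 ?_⟩
    have : (k : ℝ) ≤ (k + 1)! := by exact_mod_cast (Nat.le_succ k).trans (Nat.self_le_factorial _)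
    linarith
  have hKk : K ≤ Nat.find hex := by
    by_contra! hk
    have h1 : ((Nat.find hex + 1)! : ℝ) ≤ K ! := by exact_mod_cast Nat.factorial_le (by omega)
    have h2 := Nat.find_spec hex
    rw [div_le_iff₀ (by positivity)] at h2
    linarith [(by positivity : (0 : ℝ) < (Nat.find hex + 1)!)]
  obtain ⟨i, hi⟩ : ∃ i, Nat.find hex = i + 1 := ⟨Nat.find hex - 1, by omega⟩
  refine ⟨Nat.find hex, hKk, ?_, Nat.find_spec hex⟩
  have h := not_le.1 (Nat.find_min hex (show i < Nat.find hex by omega))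
  have hfac : ((Nat.find hex + 1)! : ℝ) = (i + 1)! * (Nat.find hex + 1) := by
    rw [hi, Nat.factorial_succ (i + 1)]; push_cast; ring
  rw [hfac, ← div_div, ← div_div]
  exact div_lt_div_of_pos_right h (by positivity)

/-- For large `|x|` some factor is small: otherwise, starting from the first index `k` with
`|x| / (k + 1)! ≤ 1 / 2`, the distances of `x / (j + 1)!` to `ℤ` would double at every step
down to `J`, from about `1 / k` up to more than `1 / 2`. -/
lemma exists_digitFactor_le {ε : ℝ} (hε : 0 < ε) :
    ∃ R : ℝ, ∀ x : ℝ, R ≤ |x| → ∃ j, digitFactor j x ≤ ε := by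
  obtain ⟨J, hJ⟩ : ∃ J : ℕ, 3 ≤ (J + 1) * ε :=
    ⟨⌈3 / ε⌉₊, by nlinarith [Nat.le_ceil (3 / ε), div_mul_cancel₀ 3 hε.ne']⟩
  refine ⟨(2 * J + 2)!, fun x hx => ?_⟩
  by_contra! hfactor
  obtain ⟨k, hk, hlow, hhigh⟩ := exists_abs_div_factorial_mem (by omega) hx
  obtain ⟨m, rfl⟩ : ∃ m, k = J + m := ⟨k - J, by omega⟩
  have hchain := two_pow_mul_norm_fourierChar_sub_one_le hJ hfactor m
  have hnear := four_mul_abs_le_norm_fourierChar_sub_one (x := x / (J + m + 1)!)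
    (by rwa [abs_div, Nat.abs_cast])
  have hfar := norm_fourierChar_sub_one_le_two (x / (J + 1)!)
  rw [abs_div, Nat.abs_cast] at hnear
  have hpow : (2 : ℝ) ^ m < (J + m : ℕ) + 1 := by
    have h2m : (2 : ℝ) ^ m * (1 / (2 * ((J + m : ℕ) + 1))) < 1 / 2 := by
      calc (2 : ℝ) ^ m * (1 / (2 * ((J + m : ℕ) + 1))) < 2 ^ m * (|x| / (J + m + 1)!) := by
            gcongr
        _ ≤ 1 / 2 := by nlinarith [pow_pos (two_pos (α := ℝ)) m]
    rw [mul_one_div, div_lt_div_iff₀ (by positivity) two_pos] at h2m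
    nlinarith
  have : 2 * m ≤ 2 ^ m := by
    obtain ⟨m', rfl⟩ : ∃ m', m = m' + 1 := ⟨m - 1, by omega⟩
    have := Nat.lt_two_pow_self (n := m')
    rw [pow_succ]; omega
  have : 2 ^ m < J + m + 1 := by exact_mod_cast hpow
  omega

lemma hasSum_one_div_factorial_sub (m : ℕ) :
    HasSum (fun k => 1 / ((m + k + 1)! : ℝ) - 1 / (m + k + 2)!) (1 / (m + 1)!) := by
  have hnonneg : ∀ k, 0 ≤ 1 / ((m + k + 1)! : ℝ) - 1 / (m + k + 2)! := fun k =>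
    sub_nonneg.2 <| one_div_le_one_div_of_le (by positivity) <| by
      exact_mod_cast Nat.factorial_le (Nat.le_succ _)
  rw [hasSum_iff_tendsto_nat_of_nonneg hnonneg]
  have hsum : ∀ n, ∑ k ∈ range n, (1 / ((m + k + 1)! : ℝ) - 1 / (m + k + 2)!)
      = 1 / (m + 1)! - 1 / (m + n + 1)! := fun n =>
    Finset.sum_range_sub' (fun k => 1 / ((m + k + 1)! : ℝ)) n
  simp_rw [hsum]
  have h0 : Tendsto (fun n => 1 / ((m + n + 1)! : ℝ)) atTop (𝓝 0) := by
    have := (Real.summable_pow_div_factorial 1).tendsto_atTop_zero.comp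
      (tendsto_add_atTop_nat (m + 1))
    simpa [Function.comp_def, add_comm, add_left_comm, ← add_assoc] using this
  simpa using h0.const_sub (1 / ((m + 1)! : ℝ))

abbrev DigitSeq := (j : ℕ) → Fin (j + 1)

def digitMeasure : Measure DigitSeq := Measure.infinitePi fun _ => uniformOn Set.univ

instance : IsProbabilityMeasure digitMeasure := by
  unfold digitMeasure; infer_instance

def expansion (ω : DigitSeq) : ℝ := ∑' j, (ω j : ℝ) / (j + 2)!

def partialExpansion (m : ℕ) (ω : DigitSeq) : ℝ := ∑ j ∈ range m, (ω j : ℝ) / (j + 2)!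

lemma digit_div_factorial_le (ω : DigitSeq) (j : ℕ) :
    (ω j : ℝ) / (j + 2)! ≤ 1 / (j + 1)! - 1 / (j + 2)! := by
  have hω : (ω j : ℝ) ≤ j := by exact_mod_cast Nat.lt_succ_iff.1 (ω j).isLt
  rw [Nat.factorial_succ (j + 1)]
  push_cast
  rw [div_le_iff₀ (by positivity)]
  field_simp
  linarith

lemma summable_digit_div_factorial (ω : DigitSeq) :
    Summable fun j => (ω j : ℝ) / (j + 2)! :=
  (hasSum_one_div_factorial_sub 0).summable.of_nonneg_of_le (fun j => by positivity)
    (fun j => by simpa using digit_div_factorial_le ω j)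

lemma expansion_sub_partialExpansion_mem (m : ℕ) (ω : DigitSeq) :
    expansion ω - partialExpansion m ω ∈ Set.Icc (0 : ℝ) (1 / (m + 1)!) := by
  have htail : expansion ω - partialExpansion m ω = ∑' k, (ω (k + m) : ℝ) / (k + m + 2)! := by
    rw [expansion, partialExpansion, ← (summable_digit_div_factorial ω).sum_add_tsum_nat_add m]
    ring
  rw [htail]
  refine ⟨tsum_nonneg fun k => by positivity, ?_⟩
  refine hasSum_le (fun k => ?_)
    ((summable_nat_add_iff m).2 (summable_digit_div_factorial ω)).hasSum
    (hasSum_one_div_factorial_sub m)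
  simpa [add_comm m k] using digit_div_factorial_le ω (k + m)

lemma continuous_digit (j : ℕ) : Continuous fun ω : DigitSeq => (ω j : ℝ) :=
  (continuous_of_discreteTopology (f := fun e : Fin (j + 1) => (e : ℝ))).comp (continuous_apply j)

lemma continuous_expansion : Continuous expansion :=
  continuous_tsum (fun j => (continuous_digit j).div_const _)
    (hasSum_one_div_factorial_sub 0).summable
    (fun j ω => by
      rw [Real.norm_of_nonneg (by positivity)]
      simpa using digit_div_factorial_le ω j)

lemma continuous_partialExpansion (m : ℕ) : Continuous (partialExpansion m) :=
  continuous_finsetSum _ fun j _ => (continuous_digit j).div_const _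

lemma tendsto_partialExpansion (ω : DigitSeq) :
    Tendsto (fun m => partialExpansion m ω) atTop (𝓝 (expansion ω)) :=
  (summable_digit_div_factorial ω).hasSum.tendsto_sum_nat

lemma integral_fourierChar_uniformOn (k : ℕ) (y : ℝ) :
    ∫ e, (𝐞 (e * y) : ℂ) ∂uniformOn (Set.univ : Set (Fin k))
      = (k : ℂ)⁻¹ * ∑ e ∈ range k, (𝐞 y : ℂ) ^ e := by
  rw [integral_fintype (.of_finite), Finset.mul_sum, ← Fin.sum_univ_eq_sum_range]
  refine Finset.sum_congr rfl fun e _ => ?_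
  rw [Measure.real, uniformOn_univ]
  simp [← Circle.coe_pow, ← AddChar.map_nsmul_eq_pow, nsmul_eq_mul]

lemma norm_integral_fourierChar_partialExpansion (x : ℝ) (m : ℕ) :
    ‖∫ ω, (𝐞 (x * partialExpansion m ω) : ℂ) ∂digitMeasure‖ = ∏ j ∈ range m, digitFactor j x := by
  set G : ((j : range m) → Fin (j + 1)) → ℂ :=
    fun ω' => ∏ j, (𝐞 ((ω' j : ℕ) * (x / ((j : ℕ) + 2)!)) : ℂ)
  have hG : ∀ ω, (𝐞 (x * partialExpansion m ω) : ℂ) = G ((range m).restrict ω) := by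
    intro ω
    rw [partialExpansion, ← Finset.sum_coe_sort (range m) fun j => (ω j : ℝ) / (j + 2)!]
    simp only [G, Real.fourierChar_apply, ← Complex.exp_sum, Finset.mul_sum, Finset.restrict]
    push_cast
    rw [Finset.sum_mul]
    congr 1
    refine Finset.sum_congr rfl fun j _ => ?_
    ring
  simp_rw [hG]
  rw [← integral_map (measurable_restrict _).aemeasurable
      (Measurable.of_discrete.aestronglyMeasurable), digitMeasure, Measure.infinitePi_map_restrict,
    integral_fintype_prod_eq_prod (E := fun j : range m => Fin (j + 1))
      (fun j e => (𝐞 ((e : ℕ) * (x / ((j : ℕ) + 2)!)) : ℂ))]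
  simp_rw [integral_fourierChar_uniformOn]
  rw [norm_prod, ← Finset.prod_coe_sort (range m)]
  refine Finset.prod_congr rfl fun j _ => ?_
  rw [digitFactor, norm_mul, norm_inv, Complex.norm_natCast, inv_mul_eq_div]
  push_cast
  rfl

lemma continuous_fourierChar_coe : Continuous fun x : ℝ => (𝐞 x : ℂ) := by fun_prop

lemma norm_integral_fourierChar_expansion_le (x : ℝ) (j : ℕ) :
    ‖∫ ω, (𝐞 (x * expansion ω) : ℂ) ∂digitMeasure‖ ≤ digitFactor j x := by
  have hlim : Tendsto (fun m => ∫ ω, (𝐞 (x * partialExpansion m ω) : ℂ) ∂digitMeasure) atTop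
      (𝓝 (∫ ω, (𝐞 (x * expansion ω) : ℂ) ∂digitMeasure)) :=
    tendsto_integral_of_dominated_convergence (fun _ => 1)
      (fun m => (continuous_fourierChar_coe.comp
        ((continuous_partialExpansion m).const_mul x)).aestronglyMeasurable)
      (integrable_const 1) (fun m => ae_of_all _ fun ω => (Circle.norm_coe _).le)
      (ae_of_all _ fun ω => (continuous_fourierChar_coe.tendsto _).comp
        ((tendsto_partialExpansion ω).const_mul x))
  refine le_of_tendsto hlim.norm (eventually_atTop.2 ⟨j + 1, fun m hm => ?_⟩)
  have hj : j ∈ range m := Finset.mem_range.2 hm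
  rw [norm_integral_fourierChar_partialExpansion, ← Finset.mul_prod_erase _ _ hj]
  exact mul_le_of_le_one_right (digitFactor_nonneg j x)
    (Finset.prod_le_one (fun i _ => digitFactor_nonneg i x) fun i _ => digitFactor_le_one i x)

def toCircle (ω : DigitSeq) : AddCircle (2 * π) := ↑(2 * π * expansion ω)

lemma continuous_toCircle : Continuous toCircle :=
  (AddCircle.continuous_mk' _).comp (continuous_const.mul continuous_expansion)

def menshovMeasure : Measure (AddCircle (2 * π)) := digitMeasure.map toCircle

instance : IsProbabilityMeasure menshovMeasure :=
  Measure.isProbabilityMeasure_map continuous_toCircle.aemeasurable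

lemma menshovMeasure_compl_range : menshovMeasure (Set.range toCircle)ᶜ = 0 := by
  rw [menshovMeasure, Measure.map_apply continuous_toCircle.measurable
    (isCompact_range continuous_toCircle).isClosed.measurableSet.compl]
  simp

lemma dist_coe_le {p : ℝ} (a b : ℝ) : dist (a : AddCircle p) b ≤ |a - b| := by
  rw [dist_eq_norm, ← AddCircle.coe_sub]
  exact QuotientAddGroup.norm_mk_le_norm

lemma range_toCircle_subset (m : ℕ) :
    Set.range toCircle ⊆ ⋃ ω' : (j : range m) → Fin (j + 1),
      Metric.closedBall (↑(2 * π * ∑ j, (ω' j : ℝ) / ((j : ℕ) + 2)! + π / (m + 1)!))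
        (π / (m + 1)!) := by
  rintro _ ⟨ω, rfl⟩
  refine Set.mem_iUnion.2 ⟨(range m).restrict ω, Metric.mem_closedBall.2 ?_⟩
  have hS : ∑ j, ((range m).restrict ω j : ℝ) / ((j : ℕ) + 2)! = partialExpansion m ω :=
    Finset.sum_coe_sort (range m) fun j => (ω j : ℝ) / (j + 2)!
  rw [hS]
  refine (dist_coe_le _ _).trans ?_
  obtain ⟨h0, h1⟩ := expansion_sub_partialExpansion_mem m ω
  rw [abs_le, div_eq_mul_one_div π]
  constructor <;> nlinarith [pi_pos]

lemma volume_range_toCircle : volume (Set.range toCircle) = 0 := by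
  have hbound : ∀ m : ℕ, volume (Set.range toCircle) ≤ ENNReal.ofReal (2 * π / (m + 1)) := by
    intro m
    refine (measure_mono (range_toCircle_subset m)).trans <|
      (measure_iUnion_fintype_le _ _).trans ?_
    simp_rw [AddCircle.volume_closedBall]
    rw [Finset.sum_const, Finset.card_univ, Fintype.card_pi]
    simp_rw [Fintype.card_fin]
    rw [Finset.prod_coe_sort (range m) (fun j => j + 1), prod_range_add_one_eq_factorial,
      nsmul_eq_mul, ← ENNReal.ofReal_natCast, ← ENNReal.ofReal_mul (by positivity)]
    apply ENNReal.ofReal_le_ofReal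
    calc (m ! : ℝ) * min (2 * π) (2 * (π / (m + 1)!)) ≤ m ! * (2 * (π / (m + 1)!)) := by
          gcongr; exact min_le_right _ _
      _ = 2 * π / (m + 1) := by
          rw [Nat.factorial_succ]; push_cast; field_simp
  have hlim : Tendsto (fun m : ℕ => ENNReal.ofReal (2 * π / (m + 1))) atTop (𝓝 0) := by
    simpa using ENNReal.tendsto_ofReal (tendsto_const_div_atTop_nhds_zero_nat (2 * π) |>.comp
      (tendsto_add_atTop_nat 1))
  exact le_antisymm (ge_of_tendsto' hlim hbound) bot_le

lemma cmFourierCoeff_menshovMeasure (n : ℤ) :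
    cmFourierCoeff menshovMeasure 1 n = ∫ ω, (𝐞 (-n * expansion ω) : ℂ) ∂digitMeasure := by
  simp only [cmFourierCoeff, Pi.one_apply, mul_one]
  rw [menshovMeasure, integral_map continuous_toCircle.aemeasurable
    (fourier (-n)).continuous.aestronglyMeasurable]
  refine integral_congr_ae (ae_of_all _ fun ω => ?_)
  simp only [toCircle]
  rw [fourier_coe_apply, Real.fourierChar_apply]
  congr 1
  push_cast
  field_simp

lemma tendsto_norm_cmFourierCoeff_menshovMeasure :
    Tendsto (fun n : ℤ => ‖cmFourierCoeff menshovMeasure 1 n‖) cofinite (𝓝 0) := by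
  rw [Metric.tendsto_nhds]
  intro ε hε
  obtain ⟨R, hR⟩ := exists_digitFactor_le (half_pos hε)
  have hnorm := tendsto_norm_cocompact_atTop.comp Int.tendsto_coe_cofinite
  filter_upwards [hnorm.eventually_ge_atTop R] with n hn
  obtain ⟨j, hj⟩ := hR (-n) (by simpa using hn)
  rw [dist_zero_right, norm_norm, cmFourierCoeff_menshovMeasure]
  exact (norm_integral_fourierChar_expansion_le _ j).trans_lt (hj.trans_lt (half_lt_self hε))

end Menshov
end

/-- Menshov's theorem: there exists a nonzero Borel measure on the circle, supported on
a compact set of Lebesgue measure zero, whose Fourier coefficients tend to `0` as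
`|n| → ∞`. -/
theorem menshov_singular_pseudofunction_measure :
    ∃ (ν : Measure (AddCircle (2 * Real.pi))) (f : AddCircle (2 * Real.pi) → ℂ),
      IsFiniteMeasure ν ∧ Integrable f ν ∧ ¬ f =ᵐ[ν] 0 ∧
      (∃ K : Set (AddCircle (2 * Real.pi)), IsCompact K ∧ volume K = 0 ∧ ν Kᶜ = 0) ∧
      Tendsto (fun n : ℤ => ‖cmFourierCoeff ν f n‖) cofinite (nhds 0) := by
  open Menshov in
  refine ⟨menshovMeasure, 1, inferInstance, integrable_const 1, fun h => ?_,
    ⟨Set.range toCircle, isCompact_range continuous_toCircle, volume_range_toCircle,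
      menshovMeasure_compl_range⟩, tendsto_norm_cmFourierCoeff_menshovMeasure⟩
  obtain ⟨_, h1⟩ := h.exists
  exact one_ne_zero h1
end
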